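/- arXiv:2210.05711 — 10 statements merged into one kernel-verified Lean document; each statement's English description precedes it below -/
import Mathlib

section
/- Let A be an n×n complex matrix with a_nn ≠ 0, and let B = A|_{a_nn} be the Schur complement of a_nn in A. Then for every index set α = {i_1,…,i_k} ⊆ {1,…,n−1} with 1 ≤ k ≤ n−1, the principal minor of B on α satisfies B(α) = (1/a_nn) · A(α ∪ {n}), where A(α ∪ {n}) is the principal minor of A on the index set α ∪ {n}. -/
open Matrix

/-- Principal minor of a matrix on an index set (with `principalMinor A ∅ = 1`). -/
def principalMinor {R : Type*} [CommRing R] {m : ℕ}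
    (A : Matrix (Fin m) (Fin m) R) (s : Finset (Fin m)) : R :=
  (A.submatrix (fun i : s => (i : Fin m)) (fun j : s => (j : Fin m))).det

/-- Principal minors of the Schur complement `B` of `a_nn` in `A`:
`B(α) = (1/a_nn) * A(α ∪ {n})` for every nonempty `α ⊆ {1,…,n-1}`. -/
theorem principalMinor_schurComplement {n : ℕ}
    (A : Matrix (Fin (n + 1)) (Fin (n + 1)) ℂ)
    (h : A (Fin.last n) (Fin.last n) ≠ 0)
    (B : Matrix (Fin n) (Fin n) ℂ)
    (hB : B = A.submatrix Fin.castSucc Fin.castSucc -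
      (A (Fin.last n) (Fin.last n))⁻¹ •
        Matrix.vecMulVec (fun i => A (Fin.castSucc i) (Fin.last n))
          (fun j => A (Fin.last n) (Fin.castSucc j))) :
    ∀ α : Finset (Fin n), 1 ≤ α.card →
      principalMinor B α = (A (Fin.last n) (Fin.last n))⁻¹ *
        principalMinor A (α.image Fin.castSucc ∪ {Fin.last n}) := by
  intro α _
  set ann := A (Fin.last n) (Fin.last n) with hann
  set s : Finset (Fin (n+1)) := α.image Fin.castSucc ∪ {Fin.last n} with hs
  have hlast : Fin.last n ∈ s := Finset.mem_union_right _ (Finset.mem_singleton_self _)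
  have hmem : ∀ i : Fin n, i ∈ α → Fin.castSucc i ∈ s := fun i hi =>
    Finset.mem_union_left _ (Finset.mem_image_of_mem _ hi)
  classical
  -- the map α ⊕ Unit → s
  let f : {x // x ∈ α} ⊕ Unit → {x // x ∈ s} :=
    Sum.elim (fun i => ⟨Fin.castSucc i.1, hmem i.1 i.2⟩) (fun _ => ⟨Fin.last n, hlast⟩)
  have hf : Function.Bijective f := by
    constructor
    · rintro (⟨i, hi⟩ | ⟨⟩) (⟨j, hj⟩ | ⟨⟩) hij <;>
        simp [f, Fin.castSucc_injective, Subtype.ext_iff] at hij ⊢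
      · exact hij
      · exact absurd hij.symm (Fin.castSucc_lt_last j).ne
    · rintro ⟨x, hx⟩
      rcases Finset.mem_union.mp hx with hx' | hx'
      · obtain ⟨i, hi, rfl⟩ := Finset.mem_image.mp hx'
        exact ⟨Sum.inl ⟨i, hi⟩, rfl⟩
      · exact ⟨Sum.inr (), by simp [f, Finset.mem_singleton.mp hx']⟩
  let e := Equiv.ofBijective f hf
  -- blocks
  let M : Matrix {x // x ∈ α} {x // x ∈ α} ℂ :=
    A.submatrix (fun i => Fin.castSucc i.1) (fun j => Fin.castSucc j.1)
  let b1 : Matrix {x // x ∈ α} Unit ℂ := fun i _ => A (Fin.castSucc i.1) (Fin.last n)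
  let c1 : Matrix Unit {x // x ∈ α} ℂ := fun _ j => A (Fin.last n) (Fin.castSucc j.1)
  let D : Matrix Unit Unit ℂ := fun _ _ => ann
  letI : Invertible D := ⟨(fun _ _ => ann⁻¹ : Matrix Unit Unit ℂ),
    by ext i j; exact (Matrix.mul_apply ..).trans (by simp [D, inv_mul_cancel₀ h]),
    by ext i j; erw [Matrix.mul_apply]; simp [D, mul_inv_cancel₀ h]⟩
  have key : principalMinor A s = (fromBlocks M b1 c1 D).det := by
    rw [principalMinor, ← Matrix.det_submatrix_equiv_self e]
    congr 1
    ext (i | ⟨⟩) (j | ⟨⟩) <;> rfl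
  have hdet : (fromBlocks M b1 c1 D).det = D.det * (M - b1 * ⅟D * c1).det :=
    Matrix.det_fromBlocks₂₂ M b1 c1 D
  have hDdet : D.det = ann := Matrix.det_unique D
  have hinv : (⅟D : Matrix Unit Unit ℂ) = fun _ _ => ann⁻¹ := rfl
  have hsub : M - b1 * ⅟D * c1 =
      B.submatrix (fun i : {x // x ∈ α} => i.1) (fun j : {x // x ∈ α} => j.1) := by
    ext i j
    simp [M, b1, c1, D, hB, Matrix.mul_apply, Matrix.vecMulVec, Matrix.sub_apply,
      Matrix.smul_apply, hinv]
    erw [Matrix.mul_apply]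
    simp
    erw [Matrix.mul_apply]
    simp
    ring
  rw [principalMinor, key, hdet, hDdet, hsub, inv_mul_cancel_left₀ h]
end

section
/- If a real n×n matrix A is D-stable, then A is invertible and its inverse A⁻¹ is D-stable. -/
open Matrix

/-- A real matrix is Hurwitz stable if every complex eigenvalue has negative real part. -/
def IsHurwitzStable {m : ℕ} (A : Matrix (Fin m) (Fin m) ℝ) : Prop :=
  ∀ μ ∈ spectrum ℂ (A.map (Complex.ofReal : ℝ → ℂ)), μ.re < 0

/-- A real matrix is D-stable if `D * A` is Hurwitz stable for every positive diagonal `D`. -/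
def IsDStable {m : ℕ} (A : Matrix (Fin m) (Fin m) ℝ) : Prop :=
  ∀ d : Fin m → ℝ, (∀ i, 0 < d i) → IsHurwitzStable (Matrix.diagonal d * A)

/-- A D-stable matrix is invertible and its inverse is D-stable. -/
theorem isDStable_inv {n : ℕ} (A : Matrix (Fin n) (Fin n) ℝ)
    (hA : IsDStable A) : IsUnit A.det ∧ IsDStable A⁻¹ := by
  set B : Matrix (Fin n) (Fin n) ℂ := A.map (Complex.ofReal : ℝ → ℂ) with hB
  have hAstable : IsHurwitzStable A := by
    have := hA (fun _ => 1) (fun _ => one_pos)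
    simpa [Matrix.diagonal_one] using this
  -- B is a unit
  have hBunit : IsUnit B := by
    rw [← spectrum.zero_notMem_iff ℂ]
    intro h0
    have := hAstable 0 h0
    simp at this
  have hBdet : IsUnit B.det := (Matrix.isUnit_iff_isUnit_det B).mp hBunit
  have hdetmap : B.det = (A.det : ℂ) := (RingHom.map_det Complex.ofRealHom A).symm
  have hAdet : IsUnit A.det := by
    rw [hdetmap] at hBdet
    have : (A.det : ℂ) ≠ 0 := hBdet.ne_zero
    exact isUnit_iff_ne_zero.mpr (by exact_mod_cast this)
  refine ⟨hAdet, ?_⟩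
  -- map of inverse
  have hinvmap : (A⁻¹).map (Complex.ofReal : ℝ → ℂ) = B⁻¹ := by
    refine (Matrix.inv_eq_right_inv ?_).symm
    have h1 : A * A⁻¹ = 1 := Matrix.mul_nonsing_inv A hAdet
    have := congrArg (fun M : Matrix (Fin n) (Fin n) ℝ =>
      Complex.ofRealHom.mapMatrix M) h1
    simp [hB] at this
    exact this
  intro d hd μ hμ
  set Dc : Matrix (Fin n) (Fin n) ℂ := Matrix.diagonal (fun i => (d i : ℂ)) with hDc
  have hmap : (Matrix.diagonal d * A⁻¹).map (Complex.ofReal : ℝ → ℂ) = Dc * B⁻¹ := by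
    show (Matrix.diagonal d * A⁻¹).map ⇑Complex.ofRealHom = Dc * B⁻¹
    rw [Matrix.map_mul, Matrix.diagonal_map (map_zero _)]
    exact congrArg₂ (· * ·) rfl hinvmap
  rw [hmap] at hμ
  -- Dc is a unit
  have hdne : ∀ i, (d i : ℂ) ≠ 0 := fun i => by
    exact_mod_cast (hd i).ne'
  have hDcdet : IsUnit Dc.det := by
    rw [hDc, Matrix.det_diagonal]
    exact isUnit_iff_ne_zero.mpr (Finset.prod_ne_zero_iff.mpr fun i _ => hdne i)
  have hDcinvdet : IsUnit (Dc⁻¹).det := Matrix.isUnit_nonsing_inv_det Dc hDcdet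
  have hprod : Dc * B⁻¹ = (B * Dc⁻¹)⁻¹ := by
    rw [Matrix.mul_inv_rev, Matrix.nonsing_inv_nonsing_inv Dc hDcdet]
  rw [hprod] at hμ
  -- B * Dc⁻¹ is a unit
  have hBDdet : IsUnit (B * Dc⁻¹).det := by
    rw [Matrix.det_mul]
    exact hBdet.mul hDcinvdet
  set u : (Matrix (Fin n) (Fin n) ℂ)ˣ := ((Matrix.isUnit_iff_isUnit_det _).mpr hBDdet).unit
    with hu
  have huval : (u : Matrix (Fin n) (Fin n) ℂ) = B * Dc⁻¹ := rfl
  have huinv : ((u⁻¹ : (Matrix (Fin n) (Fin n) ℂ)ˣ) : Matrix (Fin n) (Fin n) ℂ)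
      = (B * Dc⁻¹)⁻¹ := by
    rw [Matrix.coe_units_inv u, huval]
  have hμu : μ ∈ spectrum ℂ ((u⁻¹ : (Matrix (Fin n) (Fin n) ℂ)ˣ) : Matrix (Fin n) (Fin n) ℂ) := by
    rwa [huinv]
  have hμ0 : μ ≠ 0 := spectrum.ne_zero_of_mem_of_unit hμu
  set rμ : ℂˣ := Units.mk0 μ hμ0 with hrμ
  have hinvmem : ((rμ⁻¹ : ℂˣ) : ℂ) ∈ spectrum ℂ ((u : Matrix (Fin n) (Fin n) ℂ)) := by
    have := (spectrum.inv_mem_iff (R := ℂ) (r := rμ⁻¹) (a := u)).mpr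
    simp only [inv_inv] at this
    exact this hμu
  -- swap the product
  have hswap : ((rμ⁻¹ : ℂˣ) : ℂ) ∈ spectrum ℂ (Dc⁻¹ * B) := by
    rw [huval] at hinvmem
    exact spectrum.unit_mem_mul_comm.mp hinvmem
  -- identify Dc⁻¹ * B
  have hDcinv : Dc⁻¹ = Matrix.diagonal (fun i => ((d i : ℂ))⁻¹) := by
    apply Matrix.inv_eq_right_inv
    rw [hDc, Matrix.diagonal_mul_diagonal]
    have heq : (fun i => (d i : ℂ) * (d i : ℂ)⁻¹) = fun _ => (1 : ℂ) :=
      funext fun i => mul_inv_cancel₀ (hdne i)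
    rw [heq, Matrix.diagonal_one]
  have hDB : (Matrix.diagonal (fun i => (d i)⁻¹) * A).map (Complex.ofReal : ℝ → ℂ)
      = Dc⁻¹ * B := by
    show (Matrix.diagonal (fun i => (d i)⁻¹) * A).map ⇑Complex.ofRealHom = Dc⁻¹ * B
    rw [Matrix.map_mul, Matrix.diagonal_map (map_zero _), hDcinv]
    congr 1
    funext i
    simp
  rw [← hDB] at hswap
  have hre : (((rμ⁻¹ : ℂˣ) : ℂ)).re < 0 :=
    hA (fun i => (d i)⁻¹) (fun i => inv_pos.mpr (hd i)) _ hswap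
  have hlam : ((rμ⁻¹ : ℂˣ) : ℂ) = μ⁻¹ := by
    simp [hrμ]
  rw [hlam] at hre
  have hμeq : μ = (μ⁻¹)⁻¹ := (inv_inv μ).symm
  have hnormSq : 0 < Complex.normSq (μ⁻¹) := by
    have : μ⁻¹ ≠ 0 := inv_ne_zero hμ0
    exact Complex.normSq_pos.mpr this
  calc μ.re = ((μ⁻¹)⁻¹).re := by rw [← hμeq]
    _ = (μ⁻¹).re / Complex.normSq (μ⁻¹) := Complex.inv_re _
    _ < 0 := div_neg_of_neg_of_pos hre hnormSq
end

section
/- Let A be a real n×n Hurwitz stable matrix. Then A is D-stable if and only if det(A + iD) ≠ 0 and det(A − iD) ≠ 0 (as complex determinants, where A is regarded as a complex matrix) for every n×n real diagonal matrix D with strictly positive diagonal entries. -/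
open Matrix

open Polynomial

lemma mem_spectrum_iff_det' {n : ℕ} {M : Matrix (Fin n) (Fin n) ℂ} {μ : ℂ} :
    μ ∈ spectrum ℂ M ↔ (Matrix.scalar (Fin n) μ - M).det = 0 := by
  rw [spectrum.mem_iff]
  have h : algebraMap ℂ (Matrix (Fin n) (Fin n) ℂ) μ = Matrix.scalar (Fin n) μ := rfl
  rw [h, Matrix.isUnit_iff_isUnit_det, isUnit_iff_ne_zero, not_ne_iff]

lemma eval_charpoly' {n : ℕ} (M : Matrix (Fin n) (Fin n) ℂ) (μ : ℂ) :
    M.charpoly.eval μ = (Matrix.scalar (Fin n) μ - M).det := by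
  rw [Matrix.charpoly, ← Polynomial.coe_evalRingHom, RingHom.map_det]
  congr 1
  ext i j
  by_cases h : i = j <;>
    simp [charmatrix_apply, h, Matrix.diagonal_apply, Matrix.scalar_apply]

lemma pow_le_abs_prod (μ : ℂ) {c : ℝ} (hc : 0 ≤ c) :
    ∀ (s : Multiset ℂ), (∀ a ∈ s, c ≤ ‖a‖) →
      c ^ Multiset.card s ≤ ‖s.prod‖ := by
  refine Multiset.induction (by simp) ?_
  intro a s ih h
  rw [Multiset.prod_cons, Multiset.card_cons, pow_succ, norm_mul, mul_comm (c ^ _)]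
  exact mul_le_mul (h a (Multiset.mem_cons_self a s))
    (ih fun b hb => h b (Multiset.mem_cons_of_mem hb)) (pow_nonneg hc _)
    (norm_nonneg _)

lemma abs_det_ge {n : ℕ} (M : Matrix (Fin n) (Fin n) ℂ)
    (hs : ∀ μ ∈ spectrum ℂ M, μ.re < 0) {μ : ℂ} (hμ : 0 ≤ μ.re) :
    μ.re ^ n ≤ ‖(Matrix.scalar (Fin n) μ - M).det‖ := by
  have hmon : M.charpoly.Monic := M.charpoly_monic
  have hsplit : Splits M.charpoly := IsAlgClosed.splits _
  have hcard : Multiset.card M.charpoly.roots = n := by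
    rw [splits_iff_card_roots.mp hsplit, Matrix.charpoly_natDegree_eq_dim, Fintype.card_fin]
  have hfac := hsplit.eq_prod_roots_of_monic hmon
  have heval : M.charpoly.eval μ = (M.charpoly.roots.map fun a => μ - a).prod := by
    conv_lhs => rw [hfac]
    rw [eval_multiset_prod, Multiset.map_map]
    simp
  rw [← eval_charpoly', heval]
  have key := pow_le_abs_prod μ hμ (M.charpoly.roots.map fun a => μ - a) ?_
  · rwa [Multiset.card_map, hcard] at key
  · intro b hb
    obtain ⟨a, ha, rfl⟩ := Multiset.mem_map.mp hb
    have haroot : a ∈ spectrum ℂ M := by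
      rw [mem_spectrum_iff_det', ← eval_charpoly']
      exact (mem_roots'.mp ha).2
    have : a.re < 0 := hs a haroot
    calc μ.re ≤ (μ - a).re := by simp [Complex.sub_re]; linarith
    _ ≤ ‖μ - a‖ := Complex.re_le_norm _

section NormBound

attribute [local instance] Matrix.linftyOpNormedRing Matrix.linftyOpNormedAlgebra

lemma spec_abs_bound {n : ℕ} (M : Matrix (Fin n) (Fin n) ℂ) {μ : ℂ}
    (hμ : μ ∈ spectrum ℂ M) :
    ‖μ‖ ≤ ∑ i, ∑ j, ‖M i j‖ := by
  haveI : CompleteSpace (Matrix (Fin n) (Fin n) ℂ) := FiniteDimensional.complete ℂ _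
  have h1 : ‖μ‖ ≤ ‖M‖ * ‖(1 : Matrix (Fin n) (Fin n) ℂ)‖ :=
    spectrum.norm_le_norm_mul_of_mem hμ
  have habs : ∀ (N : Matrix (Fin n) (Fin n) ℂ),
      ‖N‖ = ↑(Finset.univ.sup fun i => ∑ j, ‖N i j‖₊) :=
    fun N => Matrix.linfty_opNorm_def N
  have hM : ‖M‖ ≤ ∑ i, ∑ j, ‖M i j‖ := by
    rw [habs]
    have : (Finset.univ.sup fun i => ∑ j, ‖M i j‖₊) ≤ ∑ i, ∑ j, ‖M i j‖₊ :=
      Finset.sup_le fun i _ =>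
        Finset.single_le_sum (f := fun i => ∑ j, ‖M i j‖₊) (fun i _ => zero_le)
          (Finset.mem_univ i)
    calc (↑(Finset.univ.sup fun i => ∑ j, ‖M i j‖₊) : ℝ)
        ≤ ↑(∑ i, ∑ j, ‖M i j‖₊) := by exact_mod_cast this
      _ = ∑ i, ∑ j, ‖M i j‖ := by
          push_cast
          rfl
  have hone : ‖(1 : Matrix (Fin n) (Fin n) ℂ)‖ ≤ 1 := by
    rw [habs]
    have : (Finset.univ.sup fun i => ∑ j, ‖(1 : Matrix (Fin n) (Fin n) ℂ) i j‖₊) ≤ 1 := by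
      refine Finset.sup_le fun i _ => le_of_eq ?_
      calc ∑ j, ‖(1 : Matrix (Fin n) (Fin n) ℂ) i j‖₊
          = ∑ j, ‖if i = j then (1:ℂ) else 0‖₊ := by
            simp [Matrix.one_apply]
        _ = 1 := by simp [apply_ite]
    exact_mod_cast this
  calc ‖μ‖ = ‖μ‖ := rfl
    _ ≤ ‖M‖ * ‖(1 : Matrix (Fin n) (Fin n) ℂ)‖ := h1
    _ ≤ (∑ i, ∑ j, ‖M i j‖) * 1 :=
        mul_le_mul hM hone (norm_nonneg _)
          (Finset.sum_nonneg fun i _ => Finset.sum_nonneg fun j _ => norm_nonneg _)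
    _ = _ := mul_one _

end NormBound

lemma det_ne_of_imag {n : ℕ} (A : Matrix (Fin n) (Fin n) ℝ)
    (hdet : (A.map (Complex.ofReal : ℝ → ℂ)).det ≠ 0)
    (H : ∀ d : Fin n → ℝ, (∀ i, 0 < d i) →
      (A.map (Complex.ofReal : ℝ → ℂ) +
          Complex.I • Matrix.diagonal (fun i => (d i : ℂ))).det ≠ 0 ∧
      (A.map (Complex.ofReal : ℝ → ℂ) -
          Complex.I • Matrix.diagonal (fun i => (d i : ℂ))).det ≠ 0)
    (e : Fin n → ℝ) (he : ∀ i, 0 < e i) (μ : ℂ) (hμ : μ.re = 0) :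
    (Matrix.scalar (Fin n) μ -
      Matrix.diagonal (fun i => (e i : ℂ)) * A.map Complex.ofReal).det ≠ 0 := by
  set Aℂ := A.map (Complex.ofReal : ℝ → ℂ) with hAC
  have hfac : Matrix.scalar (Fin n) μ - Matrix.diagonal (fun i => (e i : ℂ)) * Aℂ =
      Matrix.diagonal (fun i => (e i : ℂ)) *
        (μ • Matrix.diagonal (fun i => (((e i)⁻¹ : ℝ) : ℂ)) - Aℂ) := by
    rw [Matrix.mul_sub, Matrix.mul_smul, Matrix.diagonal_mul_diagonal]
    congr 2
    have : (fun i => (e i : ℂ) * (((e i)⁻¹ : ℝ) : ℂ)) = fun _ => (1 : ℂ) := by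
      funext i
      rw [← Complex.ofReal_mul, mul_inv_cancel₀ (he i).ne', Complex.ofReal_one]
    rw [this]
    ext i j
    simp only [Matrix.scalar_apply, Matrix.diagonal_apply, Matrix.smul_apply, Matrix.one_apply,
      smul_eq_mul, mul_ite, mul_one, mul_zero]
  rw [hfac, Matrix.det_mul]
  refine mul_ne_zero ?_ ?_
  · rw [Matrix.det_diagonal]
    exact Finset.prod_ne_zero_iff.mpr fun i _ => by
      exact_mod_cast (ne_of_gt (he i))
  · have hμeq : μ = (μ.im : ℂ) * Complex.I := by
      apply Complex.ext <;> simp [hμ]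
    rcases lt_trichotomy μ.im 0 with hy | hy | hy
    · have key : μ • Matrix.diagonal (fun i => (((e i)⁻¹ : ℝ) : ℂ)) - Aℂ =
          -(Aℂ + Complex.I • Matrix.diagonal (fun i => (((-μ.im * (e i)⁻¹ : ℝ)) : ℂ))) := by
        ext i j
        simp only [Matrix.sub_apply, Matrix.neg_apply, Matrix.add_apply, Matrix.smul_apply,
          Matrix.diagonal_apply, smul_eq_mul, mul_ite, mul_zero]
        by_cases h : i = j
        · simp only [if_pos h]
          conv_lhs => rw [hμeq]
          push_cast
          ring
        · simp only [if_neg h]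
          ring
      rw [key, Matrix.det_neg]
      refine mul_ne_zero (by simp [pow_ne_zero]) ?_
      exact (H (fun i => -μ.im * (e i)⁻¹) (fun i =>
        mul_pos (by linarith) (inv_pos.mpr (he i)))).1
    · have : μ = 0 := by rw [hμeq, hy]; simp
      rw [this, zero_smul, zero_sub, Matrix.det_neg]
      exact mul_ne_zero (by simp [pow_ne_zero]) hdet
    · have key : μ • Matrix.diagonal (fun i => (((e i)⁻¹ : ℝ) : ℂ)) - Aℂ =
          -(Aℂ - Complex.I • Matrix.diagonal (fun i => (((μ.im * (e i)⁻¹ : ℝ)) : ℂ))) := by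
        ext i j
        simp only [Matrix.sub_apply, Matrix.neg_apply, Matrix.smul_apply,
          Matrix.diagonal_apply, smul_eq_mul, mul_ite, mul_zero]
        by_cases h : i = j
        · simp only [if_pos h]
          conv_lhs => rw [hμeq]
          push_cast
          ring
        · simp only [if_neg h]
          ring
      rw [key, Matrix.det_neg]
      refine mul_ne_zero (by simp [pow_ne_zero]) ?_
      exact (H (fun i => μ.im * (e i)⁻¹) (fun i =>
        mul_pos hy (inv_pos.mpr (he i)))).2

lemma map_diag_mul {n : ℕ} (A : Matrix (Fin n) (Fin n) ℝ) (v : Fin n → ℝ) :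
    (Matrix.diagonal v * A).map (Complex.ofReal : ℝ → ℂ) =
      Matrix.diagonal (fun i => (v i : ℂ)) * A.map Complex.ofReal := by
  ext i j
  simp [Matrix.map_apply, Matrix.diagonal_mul]

lemma diag_mul_scalar {n : ℕ} (w : Fin n → ℂ) (c : ℂ) :
    Matrix.diagonal w * Matrix.scalar (Fin n) c = c • Matrix.diagonal w := by
  rw [Matrix.scalar_apply, Matrix.diagonal_mul_diagonal]
  ext i j
  by_cases h : i = j <;> simp [h, mul_comm]

lemma det_map_ne_zero {n : ℕ} {A : Matrix (Fin n) (Fin n) ℝ} (hA : IsHurwitzStable A) :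
    (A.map (Complex.ofReal : ℝ → ℂ)).det ≠ 0 := by
  intro hdet
  have h0 : (0 : ℂ) ∈ spectrum ℂ (A.map (Complex.ofReal : ℝ → ℂ)) := by
    rw [mem_spectrum_iff_det', map_zero, zero_sub, Matrix.det_neg, hdet, mul_zero]
  simpa using hA 0 h0

lemma forward_dir {n : ℕ} (A : Matrix (Fin n) (Fin n) ℝ) (hD : IsDStable A)
    (d : Fin n → ℝ) (hd : ∀ i, 0 < d i) :
    (A.map (Complex.ofReal : ℝ → ℂ) +
        Complex.I • Matrix.diagonal (fun i => (d i : ℂ))).det ≠ 0 ∧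
    (A.map (Complex.ofReal : ℝ → ℂ) -
        Complex.I • Matrix.diagonal (fun i => (d i : ℂ))).det ≠ 0 := by
  set Aℂ := A.map (Complex.ofReal : ℝ → ℂ) with hAC
  set e : Fin n → ℝ := fun i => (d i)⁻¹ with he_def
  have he : ∀ i, 0 < e i := fun i => inv_pos.mpr (hd i)
  have hstab := hD e he
  have hspec : ∀ μ : ℂ, μ.re = 0 →
      (Matrix.scalar (Fin n) μ - Matrix.diagonal (fun i => (e i : ℂ)) * Aℂ).det ≠ 0 := by
    intro μ h0 hcon
    have hmem : μ ∈ spectrum ℂ ((Matrix.diagonal e * A).map (Complex.ofReal : ℝ → ℂ)) := by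
      rw [map_diag_mul]
      exact mem_spectrum_iff_det'.mpr hcon
    have := hstab μ hmem
    rw [h0] at this
    exact lt_irrefl 0 this
  have hprod : (Matrix.diagonal (fun i => (d i : ℂ))).det ≠ 0 := by
    rw [Matrix.det_diagonal]
    exact Finset.prod_ne_zero_iff.mpr fun i _ => by exact_mod_cast (hd i).ne'
  have h1 : (fun i => (d i : ℂ) * (e i : ℂ)) = fun _ => (1 : ℂ) := by
    funext i
    rw [he_def, ← Complex.ofReal_mul, mul_inv_cancel₀ (hd i).ne', Complex.ofReal_one]
  constructor
  · have key : Aℂ + Complex.I • Matrix.diagonal (fun i => (d i : ℂ)) =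
        Matrix.diagonal (fun i => (d i : ℂ)) *
          -(Matrix.scalar (Fin n) (-Complex.I) -
              Matrix.diagonal (fun i => (e i : ℂ)) * Aℂ) := by
      rw [neg_sub, Matrix.mul_sub, ← Matrix.mul_assoc,
        Matrix.diagonal_mul_diagonal, h1, Matrix.diagonal_one, Matrix.one_mul,
        diag_mul_scalar, neg_smul, sub_neg_eq_add]
    rw [key, Matrix.det_mul, Matrix.det_neg]
    exact mul_ne_zero hprod (mul_ne_zero (pow_ne_zero _ (by norm_num))
      (hspec (-Complex.I) (by simp)))
  · have key : Aℂ - Complex.I • Matrix.diagonal (fun i => (d i : ℂ)) =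
        Matrix.diagonal (fun i => (d i : ℂ)) *
          -(Matrix.scalar (Fin n) Complex.I -
              Matrix.diagonal (fun i => (e i : ℂ)) * Aℂ) := by
      rw [neg_sub, Matrix.mul_sub, ← Matrix.mul_assoc,
        Matrix.diagonal_mul_diagonal, h1, Matrix.diagonal_one, Matrix.one_mul,
        diag_mul_scalar]
    rw [key, Matrix.det_mul, Matrix.det_neg]
    exact mul_ne_zero hprod (mul_ne_zero (pow_ne_zero _ (by norm_num))
      (hspec Complex.I (by simp)))

lemma icc_stable {n : ℕ} (F : ℝ → Matrix (Fin n) (Fin n) ℂ) (hcontF : Continuous F)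
    (hno : ∀ t ∈ Set.Icc (0:ℝ) 1, ∀ μ : ℂ, μ.re = 0 →
      (Matrix.scalar (Fin n) μ - F t).det ≠ 0)
    (h0 : ∀ μ ∈ spectrum ℂ (F 0), μ.re < 0) :
    ∀ μ ∈ spectrum ℂ (F 1), μ.re < 0 := by
  have hG : Continuous fun p : ℝ × ℂ => (Matrix.scalar (Fin n) p.2 - F p.1).det := by
    refine Continuous.matrix_det (Continuous.sub ?_ (hcontF.comp continuous_fst))
    have hsc : (fun p : ℝ × ℂ => Matrix.scalar (Fin n) p.2) =
        fun p : ℝ × ℂ => Matrix.diagonal (fun _ => p.2) := by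
      funext p
      rw [Matrix.scalar_apply]
    rw [hsc]
    exact Continuous.matrix_diagonal (continuous_pi fun _ => continuous_snd)
  set T := {t : ℝ | t ∈ Set.Icc (0:ℝ) 1 ∧ ∀ μ ∈ spectrum ℂ (F t), μ.re < 0} with hT_def
  set S := {t : ℝ | t ∈ Set.Icc (0:ℝ) 1 ∧ ∃ μ ∈ spectrum ℂ (F t), 0 ≤ μ.re} with hS_def
  have hTclosed : IsClosed T := by
    apply IsSeqClosed.isClosed
    intro x t hx hlim
    have htI : t ∈ Set.Icc (0:ℝ) 1 :=
      isClosed_Icc.isSeqClosed (fun k => (hx k).1) hlim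
    refine ⟨htI, fun μ hμ => ?_⟩
    by_contra hre
    push_neg at hre
    have hdet0 : (Matrix.scalar (Fin n) μ - F t).det = 0 := mem_spectrum_iff_det'.mp hμ
    have hrene : μ.re ≠ 0 := fun h => hno t htI μ h hdet0
    have hrepos : 0 < μ.re := lt_of_le_of_ne hre (Ne.symm hrene)
    have hseq : Filter.Tendsto
        (fun k => ‖(Matrix.scalar (Fin n) μ - F (x k)).det‖)
        Filter.atTop (nhds ‖(Matrix.scalar (Fin n) μ - F t).det‖) := by
      have h2 : Filter.Tendsto (fun k => ((x k : ℝ), μ)) Filter.atTop (nhds (t, μ)) :=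
        hlim.prodMk_nhds tendsto_const_nhds
      have h3 := (hG.tendsto (t, μ)).comp h2
      exact (continuous_norm.tendsto
        ((Matrix.scalar (Fin n) μ - F t).det)).comp h3
    have hge : μ.re ^ n ≤ ‖(Matrix.scalar (Fin n) μ - F t).det‖ :=
      ge_of_tendsto hseq
        (Filter.Eventually.of_forall fun k => abs_det_ge (F (x k)) (hx k).2 hre)
    rw [hdet0] at hge
    simp only [norm_zero] at hge
    exact absurd hge (not_le.mpr (pow_pos hrepos n))
  have hSclosed : IsClosed S := by
    apply IsSeqClosed.isClosed
    intro x t hx hlim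
    have htI : t ∈ Set.Icc (0:ℝ) 1 :=
      isClosed_Icc.isSeqClosed (fun k => (hx k).1) hlim
    choose μ hμs hμre using fun k => (hx k).2
    have hBcont : Continuous fun s : ℝ => ∑ i, ∑ j, ‖F s i j‖ := by
      refine continuous_finset_sum _ fun i _ => continuous_finset_sum _ fun j _ => ?_
      exact continuous_norm.comp (hcontF.matrix_elem i j)
    have hBtend : Filter.Tendsto (fun k => ∑ i, ∑ j, ‖F (x k) i j‖)
        Filter.atTop (nhds (∑ i, ∑ j, ‖F t i j‖)) :=
      (hBcont.tendsto t).comp hlim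
    obtain ⟨C, hC⟩ := hBtend.bddAbove_range
    have hbound : ∀ k, μ k ∈ Metric.closedBall (0:ℂ) C := by
      intro k
      rw [Metric.mem_closedBall, dist_zero_right]
      calc ‖μ k‖ = ‖μ k‖ := rfl
        _ ≤ ∑ i, ∑ j, ‖F (x k) i j‖ := spec_abs_bound (F (x k)) (hμs k)
        _ ≤ C := hC ⟨k, rfl⟩
    obtain ⟨ν, hνball, φ, hφ, hνlim⟩ :=
      (isCompact_closedBall (0:ℂ) C).tendsto_subseq hbound
    refine ⟨htI, ν, ?_, ?_⟩
    · rw [mem_spectrum_iff_det']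
      have h2 : Filter.Tendsto (fun k => (x (φ k), μ (φ k))) Filter.atTop (nhds (t, ν)) :=
        (hlim.comp hφ.tendsto_atTop).prodMk_nhds hνlim
      have h3 := (hG.tendsto (t, ν)).comp h2
      have h4 : ((fun p : ℝ × ℂ => (Matrix.scalar (Fin n) p.2 - F p.1).det) ∘
          fun k => (x (φ k), μ (φ k))) = fun _ => (0:ℂ) :=
        funext fun k => mem_spectrum_iff_det'.mp (hμs (φ k))
      rw [h4] at h3
      simpa using tendsto_nhds_unique h3 tendsto_const_nhds
    · exact ge_of_tendsto ((Complex.continuous_re.tendsto ν).comp hνlim)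
        (Filter.Eventually.of_forall fun k => hμre (φ k))
  have h0T : (0:ℝ) ∈ T := ⟨⟨le_refl 0, zero_le_one⟩, h0⟩
  have h1T : (1:ℝ) ∈ T := by
    by_contra h1T
    have h0S : (0:ℝ) ∉ S := by
      intro h0S
      obtain ⟨μ, hμ1, hμ2⟩ := h0S.2
      exact absurd (h0T.2 μ hμ1) (not_lt.mpr hμ2)
    have hsub : Set.Icc (0:ℝ) 1 ⊆ Sᶜ ∪ Tᶜ := by
      intro t ht
      by_cases hts : t ∈ S
      · right
        intro htT
        obtain ⟨μ, hμ1, hμ2⟩ := hts.2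
        exact absurd (htT.2 μ hμ1) (not_lt.mpr hμ2)
      · left
        exact hts
    obtain ⟨w, hwI, hwS, hwT⟩ :=
      isPreconnected_Icc Sᶜ Tᶜ hSclosed.isOpen_compl hTclosed.isOpen_compl hsub
        ⟨0, ⟨le_refl 0, zero_le_one⟩, h0S⟩ ⟨1, ⟨zero_le_one, le_refl 1⟩, h1T⟩
    apply hwS
    refine ⟨hwI, ?_⟩
    by_contra hw
    push_neg at hw
    exact hwT ⟨hwI, hw⟩
  exact h1T.2

lemma backward_dir {n : ℕ} (A : Matrix (Fin n) (Fin n) ℝ) (hA : IsHurwitzStable A)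
    (H : ∀ d : Fin n → ℝ, (∀ i, 0 < d i) →
      (A.map (Complex.ofReal : ℝ → ℂ) +
          Complex.I • Matrix.diagonal (fun i => (d i : ℂ))).det ≠ 0 ∧
      (A.map (Complex.ofReal : ℝ → ℂ) -
          Complex.I • Matrix.diagonal (fun i => (d i : ℂ))).det ≠ 0) :
    IsDStable A := by
  intro d hd
  have hdet : (A.map (Complex.ofReal : ℝ → ℂ)).det ≠ 0 := det_map_ne_zero hA
  have hepos : ∀ t ∈ Set.Icc (0:ℝ) 1, ∀ i, 0 < 1 - t + t * d i := by
    intro t ht i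
    rcases eq_or_lt_of_le ht.1 with h0 | h0
    · rw [← h0]
      norm_num
    · have h2 : 0 ≤ 1 - t := by linarith [ht.2]
      have h3 := mul_pos h0 (hd i)
      linarith
  have hkey := icc_stable
    (fun t => Matrix.diagonal (fun i => ((1 - t + t * d i : ℝ) : ℂ)) *
      A.map (Complex.ofReal : ℝ → ℂ)) ?_ ?_ ?_
  · have hmap : (Matrix.diagonal d * A).map (Complex.ofReal : ℝ → ℂ) =
        Matrix.diagonal (fun i => ((1 - 1 + 1 * d i : ℝ) : ℂ)) *
          A.map (Complex.ofReal : ℝ → ℂ) := by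
      rw [map_diag_mul]
      congr 1
      funext i
      norm_num
    intro μ hμ
    rw [hmap] at hμ
    exact hkey μ hμ
  · refine Continuous.matrix_mul ?_ continuous_const
    refine Continuous.matrix_diagonal ?_
    refine continuous_pi fun i => Complex.continuous_ofReal.comp ?_
    fun_prop
  · exact fun t ht μ hμ =>
      det_ne_of_imag A hdet H (fun i => 1 - t + t * d i) (hepos t ht) μ hμ
  · intro μ hμ
    have hF0 : Matrix.diagonal (fun i => ((1 - 0 + 0 * d i : ℝ) : ℂ)) *
        A.map (Complex.ofReal : ℝ → ℂ) = A.map (Complex.ofReal : ℝ → ℂ) := by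
      have h1 : (fun i => ((1 - 0 + 0 * d i : ℝ) : ℂ)) = fun _ => (1:ℂ) := by
        funext i
        norm_num
      rw [h1, Matrix.diagonal_one, Matrix.one_mul]
    refine hA μ ?_
    rw [← hF0]
    exact hμ

/-- A Hurwitz stable matrix `A` is D-stable iff `det(A ± iD) ≠ 0` for every positive
diagonal matrix `D`. -/
theorem isDStable_iff_det_add_smul_I_ne_zero {n : ℕ}
    (A : Matrix (Fin n) (Fin n) ℝ) (hA : IsHurwitzStable A) :
    IsDStable A ↔ ∀ d : Fin n → ℝ, (∀ i, 0 < d i) →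
      (A.map (Complex.ofReal : ℝ → ℂ) +
          Complex.I • Matrix.diagonal (fun i => (d i : ℂ))).det ≠ 0 ∧
      (A.map (Complex.ofReal : ℝ → ℂ) -
          Complex.I • Matrix.diagonal (fun i => (d i : ℂ))).det ≠ 0 := by
  constructor
  · exact fun hD d hd => forward_dir A hD d hd
  · exact fun H => backward_dir A hA H
end

section
/- If a real n×n matrix A is D-stable, then −A is a P₀⁺-matrix; that is, every principal minor of −A is nonnegative, and for each k with 1 ≤ k ≤ n the sum of all k×k principal minors of −A is strictly positive. -/
open Matrix Finset Polynomial

/-! ### Positivity of coefficients of Hurwitz polynomials -/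

/-- All coefficients up to the degree are positive. -/
def PosCoeff (p : ℝ[X]) : Prop := ∀ k ≤ p.natDegree, 0 < p.coeff k

lemma PosCoeff.ne_zero {p : ℝ[X]} (hp : PosCoeff p) : p ≠ 0 := by
  intro h
  have := hp p.natDegree le_rfl
  simp [h] at this

lemma PosCoeff.coeff_nonneg {p : ℝ[X]} (hp : PosCoeff p) (k : ℕ) : 0 ≤ p.coeff k := by
  rcases le_or_gt k p.natDegree with h | h
  · exact (hp k h).le
  · simp [Polynomial.coeff_eq_zero_of_natDegree_lt h]

lemma PosCoeff.mul {p q : ℝ[X]} (hp : PosCoeff p) (hq : PosCoeff q) : PosCoeff (p * q) := by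
  intro k hk
  rw [Polynomial.natDegree_mul hp.ne_zero hq.ne_zero] at hk
  rw [Polynomial.coeff_mul]
  have hmem : (min k p.natDegree, k - min k p.natDegree) ∈ Finset.HasAntidiagonal.antidiagonal k := by
    rw [Finset.HasAntidiagonal.mem_antidiagonal]; omega
  refine Finset.sum_pos' (fun c _ => mul_nonneg (hp.coeff_nonneg _) (hq.coeff_nonneg _))
    ⟨_, hmem, mul_pos (hp _ (min_le_right _ _)) (hq _ (by omega))⟩

lemma hurwitz_posCoeff : ∀ N : ℕ, ∀ p : ℝ[X], p.natDegree = N → p.Monic →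
    (∀ z : ℂ, aeval z p = 0 → z.re < 0) → PosCoeff p := by
  intro N
  induction N using Nat.strong_induction_on with
  | _ N ih =>
  intro p hdeg hm hroots
  rcases Nat.eq_zero_or_pos N with h0 | hNpos
  · have hp1 : p = 1 := hm.natDegree_eq_zero.mp (by omega)
    intro k hk
    have : k = 0 := by omega
    simp [hp1, this]
  · have hdne : p.degree ≠ 0 := by
      rw [Polynomial.degree_eq_natDegree hm.ne_zero, hdeg]
      exact_mod_cast by omega
    obtain ⟨z, hz⟩ := IsAlgClosed.exists_aeval_eq_zero ℂ p hdne
    have hzre : z.re < 0 := hroots z hz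
    by_cases him : z.im = 0
    · -- real root
      have hzeq : z = (z.re : ℂ) := Complex.ext rfl (by simp [him])
      have hr : p.eval z.re = 0 := by
        rw [hzeq] at hz
        have : aeval ((z.re : ℝ) : ℂ) p = ((p.eval z.re : ℝ) : ℂ) := by
          exact_mod_cast aeval_ofReal p z.re
        rw [this] at hz
        exact_mod_cast hz
      obtain ⟨q, hq⟩ := Polynomial.dvd_iff_isRoot.mpr hr
      have hqm : q.Monic := (Polynomial.monic_X_sub_C z.re).of_mul_monic_left (hq ▸ hm)
      have hdq : q.natDegree = N - 1 := by
        have h1 := Polynomial.natDegree_mul (Polynomial.X_sub_C_ne_zero z.re) hqm.ne_zero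
        rw [← hq, Polynomial.natDegree_X_sub_C, hdeg] at h1
        omega
      have hqroots : ∀ w : ℂ, aeval w q = 0 → w.re < 0 := fun w hw =>
        hroots w (by rw [hq, Polynomial.aeval_mul, hw, mul_zero])
      have hqpos := ih (N - 1) (by omega) q hdq hqm hqroots
      have hlin : PosCoeff (X - C z.re) := by
        intro k hk
        rw [Polynomial.natDegree_X_sub_C] at hk
        interval_cases k <;> simp <;> linarith
      rw [hq]
      exact hlin.mul hqpos
    · -- complex root, quadratic factor
      obtain ⟨q, hq⟩ := p.quadratic_dvd_of_aeval_eq_zero_im_ne_zero hz him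
      set w : ℝ[X] := X ^ 2 - C (2 * z.re) * X + C (‖z‖ ^ 2) with hw
      have hwd : w.natDegree = 2 := by
        rw [hw]; compute_degree!
      have hc0 : w.coeff 0 = ‖z‖ ^ 2 := by
        simp only [hw, Polynomial.coeff_add, Polynomial.coeff_sub, Polynomial.coeff_X_pow,
          Polynomial.coeff_C_mul, Polynomial.coeff_X_zero, Polynomial.coeff_C]
        norm_num
      have hc1 : w.coeff 1 = -(2 * z.re) := by
        simp only [hw, Polynomial.coeff_add, Polynomial.coeff_sub, Polynomial.coeff_X_pow,
          Polynomial.coeff_C_mul, Polynomial.coeff_X_one, Polynomial.coeff_C]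
        norm_num
      have hc2 : w.coeff 2 = 1 := by
        simp only [hw, Polynomial.coeff_add, Polynomial.coeff_sub, Polynomial.coeff_X_pow,
          Polynomial.coeff_C_mul, Polynomial.coeff_X, Polynomial.coeff_C]
        norm_num
      have hwm : w.Monic := by
        rw [Polynomial.Monic, Polynomial.leadingCoeff, hwd, hc2]
      have hqm : q.Monic := hwm.of_mul_monic_left (hq ▸ hm)
      have hdq : q.natDegree = N - 2 := by
        have h1 := Polynomial.natDegree_mul hwm.ne_zero hqm.ne_zero
        rw [← hq, hwd, hdeg] at h1
        omega
      have hN2 : 2 ≤ N := by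
        by_contra h
        have : p.natDegree < 2 := by omega
        have := Polynomial.natDegree_mul hwm.ne_zero hqm.ne_zero
        rw [← hq, hwd] at this
        omega
      have hqroots : ∀ v : ℂ, aeval v q = 0 → v.re < 0 := fun v hv =>
        hroots v (by rw [hq, Polynomial.aeval_mul, hv, mul_zero])
      have hqpos := ih (N - 2) (by omega) q hdq hqm hqroots
      have hzne : z ≠ 0 := fun h => by simp [h] at hzre
      have hwpos : PosCoeff w := by
        have hzne' : z ≠ 0 := fun h => by simp [h] at hzre
        have hnz : 0 < ‖z‖ ^ 2 := by
          have := norm_pos_iff.mpr hzne'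
          positivity
        intro k hk
        rw [hwd] at hk
        interval_cases k
        · rw [hc0]; exact hnz
        · rw [hc1]; linarith
        · rw [hc2]; norm_num
      rw [hq]
      exact hwpos.mul hqpos

/-! ### Determinant expansion into principal minors -/

section Det

variable {R : Type*} [CommRing R] {n : ℕ}

lemma det_piecewise_one (M : Matrix (Fin n) (Fin n) R) (s : Finset (Fin n)) :
    (Matrix.of (s.piecewise (1 : Matrix (Fin n) (Fin n) R) M)).det = principalMinor M sᶜ := by
  set N : Matrix (Fin n) (Fin n) R := Matrix.of (s.piecewise (1 : Matrix (Fin n) (Fin n) R) M)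
    with hN
  have hblock : ∀ i, ¬(i ∉ s) → ∀ j, (j ∉ s) → N i j = 0 := by
    intro i hi j hj
    rw [not_not] at hi
    have hne : i ≠ j := fun h => hj (h ▸ hi)
    simp [hN, Finset.piecewise, hi, Matrix.one_apply_ne hne]
  rw [Matrix.twoBlockTriangular_det N (fun j => j ∉ s) hblock]
  have h2 : (Matrix.toSquareBlockProp N fun i => ¬(i ∉ s)) = 1 := by
    ext ⟨i, hi⟩ ⟨j, hj⟩
    rw [not_not] at hi
    simp [Matrix.toSquareBlockProp, hN, Finset.piecewise, hi,
      Matrix.one_apply, Subtype.ext_iff]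
  have h1 : (Matrix.toSquareBlockProp N fun j => j ∉ s).det = principalMinor M sᶜ := by
    rw [Matrix.equiv_block_det N (p := fun j => j ∉ s) (q := fun j => j ∈ sᶜ)
      (fun x => by simp)]
    have heq : (Matrix.toSquareBlockProp N fun j => j ∈ sᶜ)
        = ((M.submatrix (fun i : (sᶜ : Finset (Fin n)) => (i : Fin n))
            (fun j : (sᶜ : Finset (Fin n)) => (j : Fin n)))) := by
      ext ⟨i, hi⟩ ⟨j, hj⟩
      have hi' : i ∉ s := by simpa using hi
      simp [Matrix.toSquareBlockProp, hN, Finset.piecewise, hi']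
    unfold principalMinor
    rw [heq]
    congr!
  rw [h1, h2, Matrix.det_one, mul_one]

lemma det_smul_one_add (x : R) (M : Matrix (Fin n) (Fin n) R) :
    (x • (1 : Matrix (Fin n) (Fin n) R) + M).det
      = ∑ s : Finset (Fin n), x ^ (n - s.card) * principalMinor M s := by
  have step1 : (x • (1 : Matrix (Fin n) (Fin n) R) + M).det
      = ∑ s : Finset (Fin n),
          Matrix.detRowAlternating (s.piecewise (x • (1 : Matrix (Fin n) (Fin n) R)) M) :=
    (Matrix.detRowAlternating.toMultilinearMap.map_add_univ
      (x • (1 : Matrix (Fin n) (Fin n) R) : Fin n → Fin n → R) (M : Fin n → Fin n → R))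
  have step2 : ∀ s : Finset (Fin n),
      Matrix.detRowAlternating (s.piecewise (x • (1 : Matrix (Fin n) (Fin n) R)) M)
        = x ^ s.card * principalMinor M sᶜ := by
    intro s
    set N : Matrix (Fin n) (Fin n) R := Matrix.of (s.piecewise (1 : Matrix (Fin n) (Fin n) R) M)
      with hNdef
    have hpe : (s.piecewise ((x • (1 : Matrix (Fin n) (Fin n) R)) : Fin n → Fin n → R)
          (M : Fin n → Fin n → R))
        = s.piecewise (fun i => x • N i) (N : Fin n → Fin n → R) := by
      funext i
      by_cases h : i ∈ s
      · simp only [Finset.piecewise, h, if_true]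
        funext j
        simp [hNdef, Finset.piecewise, h]
      · simp only [Finset.piecewise, h, if_false]
        funext j; simp [hNdef, Finset.piecewise, h]
    rw [hpe]
    have h3 : Matrix.detRowAlternating (s.piecewise (fun i => x • N i) (N : Fin n → Fin n → R))
        = (∏ _i ∈ s, x) • Matrix.detRowAlternating (N : Fin n → Fin n → R) :=
      Matrix.detRowAlternating.toMultilinearMap.map_piecewise_smul
        (fun _ : Fin n => x) (N : Fin n → Fin n → R) s
    rw [h3, Finset.prod_const]
    have : Matrix.detRowAlternating (N : Fin n → Fin n → R) = principalMinor M sᶜ :=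
      det_piecewise_one M s
    rw [this, smul_eq_mul]
  rw [step1]
  rw [Finset.sum_congr rfl (fun s _ => step2 s)]
  refine Fintype.sum_equiv (Function.Involutive.toPerm _
    (fun s : Finset (Fin n) => compl_compl s)) _ _ (fun s => ?_)
  have hcard : s.card ≤ n := by simpa using Finset.card_le_univ s
  have hc : (sᶜ : Finset (Fin n)).card = n - s.card := by
    simp [Finset.card_compl]
  change x ^ s.card * principalMinor M sᶜ = x ^ (n - (sᶜ : Finset (Fin n)).card) * principalMinor M sᶜ
  rw [hc, Nat.sub_sub_self hcard]

end Det

section Charpoly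

open Polynomial

lemma principalMinor_map_C {n : ℕ} (B : Matrix (Fin n) (Fin n) ℝ) (s : Finset (Fin n)) :
    principalMinor (B.map (Polynomial.C : ℝ → ℝ[X])) s = Polynomial.C (principalMinor B s) := by
  unfold principalMinor
  rw [Matrix.submatrix_map, RingHom.map_det]
  congr 1

lemma charpoly_coeff_eq_sum_minors {n : ℕ} (B : Matrix (Fin n) (Fin n) ℝ) {k : ℕ} (hk : k ≤ n) :
    B.charpoly.coeff (n - k)
      = ∑ s ∈ Finset.powersetCard k (Finset.univ : Finset (Fin n)),
          principalMinor (-B) s := by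
  have hcm : Matrix.charmatrix B
      = (X : ℝ[X]) • (1 : Matrix (Fin n) (Fin n) ℝ[X]) + ((-B).map (C : ℝ → ℝ[X])) := by
    ext i j
    by_cases h : i = j <;>
      simp [Matrix.charmatrix_apply, h, Matrix.one_apply, Matrix.diagonal_apply,
        sub_eq_add_neg, Matrix.smul_apply, Matrix.add_apply, Matrix.map_apply]
  rw [Matrix.charpoly, hcm, det_smul_one_add]
  have hterm : ∀ s : Finset (Fin n),
      ((X : ℝ[X]) ^ (n - s.card) * principalMinor ((-B).map (C : ℝ → ℝ[X])) s).coeff (n - k)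
        = if s.card = k then principalMinor (-B) s else 0 := by
    intro s
    rw [principalMinor_map_C, mul_comm, Polynomial.coeff_C_mul, Polynomial.coeff_X_pow]
    have hcard : s.card ≤ n := by simpa using Finset.card_le_univ s
    by_cases h : s.card = k
    · have : n - k = n - s.card := by omega
      simp [h, this]
    · have : ¬(n - k = n - s.card) := by omega
      simp [h, this]
  rw [Polynomial.finset_sum_coeff]
  rw [Finset.sum_congr rfl (fun s _ => hterm s)]
  rw [← Finset.sum_filter]
  congr 1
  rw [Finset.powersetCard_eq_filter, Finset.powerset_univ]

lemma principalMinor_diagonal_mul {n : ℕ} (d : Fin n → ℝ) (M : Matrix (Fin n) (Fin n) ℝ)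
    (s : Finset (Fin n)) :
    principalMinor (Matrix.diagonal d * M) s = (∏ i ∈ s, d i) * principalMinor M s := by
  unfold principalMinor
  have h : (Matrix.diagonal d * M).submatrix (fun i : s => (i : Fin n)) (fun j : s => (j : Fin n))
      = Matrix.diagonal (fun i : s => d i) *
        M.submatrix (fun i : s => (i : Fin n)) (fun j : s => (j : Fin n)) := by
    ext i j
    simp [Matrix.submatrix_apply, Matrix.diagonal_mul]
  rw [h, Matrix.det_mul, Matrix.det_diagonal]
  congr 1
  exact Finset.prod_coe_sort s d

lemma charpoly_root_mem_spectrum {m : ℕ} (B : Matrix (Fin m) (Fin m) ℝ) (z : ℂ)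
    (hz : Polynomial.aeval z B.charpoly = 0) :
    z ∈ spectrum ℂ (B.map (Complex.ofReal : ℝ → ℂ)) := by
  set Bc := B.map (Complex.ofReal : ℝ → ℂ) with hBc
  have hmap : Bc.charpoly = B.charpoly.map (Complex.ofRealHom) := by
    rw [hBc]
    exact Matrix.charpoly_map B Complex.ofRealHom
  have h1 : (Bc.charpoly).eval z = 0 := by
    rw [hmap, Polynomial.eval_map]
    have : (Complex.ofRealHom : ℝ →+* ℂ) = algebraMap ℝ ℂ := rfl
    rw [this, ← Polynomial.aeval_def]
    exact hz
  have hdeteq : Bc.charpoly.eval z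
      = ((algebraMap ℂ (Matrix (Fin m) (Fin m) ℂ)) z - Bc).det := by
    rw [Matrix.charpoly]
    calc (Matrix.charmatrix Bc).det.eval z
        = ((Matrix.charmatrix Bc).map (Polynomial.evalRingHom z)).det :=
          RingHom.map_det (Polynomial.evalRingHom z) (Matrix.charmatrix Bc)
      _ = _ := by
          congr 1
          ext i j
          by_cases h : i = j <;>
            simp [Matrix.charmatrix_apply, h, Matrix.algebraMap_eq_diagonal,
              Matrix.diagonal_apply, Matrix.sub_apply, Matrix.map_apply]
  rw [spectrum.mem_iff]
  rw [Matrix.isUnit_iff_isUnit_det]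
  rw [← hdeteq, h1]
  simp

end Charpoly

lemma key_sum_pos {n : ℕ} (A : Matrix (Fin n) (Fin n) ℝ) (hA : IsDStable A)
    (d : Fin n → ℝ) (hd : ∀ i, 0 < d i) {k : ℕ} (hk : k ≤ n) :
    0 < ∑ s ∈ Finset.powersetCard k (Finset.univ : Finset (Fin n)),
        (∏ i ∈ s, d i) * principalMinor (-A) s := by
  set B := Matrix.diagonal d * A with hB
  have hroots : ∀ z : ℂ, Polynomial.aeval z B.charpoly = 0 → z.re < 0 := fun z hz =>
    hA d hd z (charpoly_root_mem_spectrum B z hz)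
  have hdim : B.charpoly.natDegree = n := by
    rw [Matrix.charpoly_natDegree_eq_dim, Fintype.card_fin]
  have hpos := hurwitz_posCoeff n B.charpoly hdim (Matrix.charpoly_monic B) hroots
  have hcoeff := hpos (n - k) (by omega)
  rw [charpoly_coeff_eq_sum_minors B hk] at hcoeff
  refine lt_of_lt_of_eq hcoeff (Finset.sum_congr rfl fun s _ => ?_)
  have hnegB : -B = Matrix.diagonal d * (-A) := by rw [hB, Matrix.mul_neg]
  rw [hnegB, principalMinor_diagonal_mul]


/-- If `A` is D-stable then `-A` is a `P₀⁺`-matrix: all principal minors of `-A` are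
nonnegative and, for each `1 ≤ k ≤ n`, the sum of all `k × k` principal minors of `-A`
is strictly positive. -/
theorem neg_is_P0_plus_of_isDStable {n : ℕ} (A : Matrix (Fin n) (Fin n) ℝ)
    (hA : IsDStable A) :
    (∀ s : Finset (Fin n), 0 ≤ principalMinor (-A) s) ∧
    (∀ k : ℕ, 1 ≤ k → k ≤ n →
      0 < ∑ s ∈ Finset.powersetCard k (Finset.univ : Finset (Fin n)),
        principalMinor (-A) s) := by
  constructor
  · intro s
    by_cases hs : s = ∅
    · subst hs
      have h1 : principalMinor (-A) (∅ : Finset (Fin n)) = 1 := by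
        haveI : IsEmpty ((∅ : Finset (Fin n)) : Type) :=
          Finset.isEmpty_coe_sort.mpr rfl
        unfold principalMinor
        exact Matrix.det_isEmpty
      rw [h1]
      norm_num
    · set g : ℝ → ℝ := fun ε => ∑ t ∈ Finset.powersetCard s.card Finset.univ,
        (∏ i ∈ t, (if i ∈ s then (1 : ℝ) else ε)) * principalMinor (-A) t with hg
      have hgpos : ∀ ε : ℝ, 0 < ε → 0 < g ε := fun ε hε =>
        key_sum_pos A hA (fun i => if i ∈ s then (1 : ℝ) else ε)
          (fun i => by split <;> [norm_num; exact hε])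
          (by simpa using Finset.card_le_univ s)
      have hg0 : g 0 = principalMinor (-A) s := by
        rw [hg]
        dsimp only
        rw [Finset.sum_eq_single s]
        · have h1 : ∀ i ∈ s, (if i ∈ s then (1 : ℝ) else (0 : ℝ)) = 1 := fun i hi => if_pos hi
          rw [Finset.prod_congr rfl h1, Finset.prod_const_one, one_mul]
        · intro t ht hts
          have htc : t.card = s.card := (Finset.mem_powersetCard.mp ht).2
          have hnsub : ¬ t ⊆ s := fun hsub => hts (Finset.eq_of_subset_of_card_le hsub (by omega))
          obtain ⟨i, hit, his⟩ := Finset.not_subset.mp hnsub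
          have hzero : (if i ∈ s then (1 : ℝ) else (0 : ℝ)) = 0 := if_neg his
          rw [Finset.prod_eq_zero hit hzero, zero_mul]
        · intro hs'
          exact absurd (Finset.mem_powersetCard.mpr ⟨Finset.subset_univ s, rfl⟩) hs'
      have hcont : Continuous g := by
        apply continuous_finset_sum
        intro t _
        apply Continuous.mul _ continuous_const
        apply continuous_finset_prod
        intro i _
        show Continuous (fun ε : ℝ => if i ∈ s then (1 : ℝ) else ε)
        by_cases h : i ∈ s
        · have heq : (fun ε : ℝ => if i ∈ s then (1 : ℝ) else ε) = fun _ => (1 : ℝ) := by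
            funext ε; exact if_pos h
          rw [heq]; exact continuous_const
        · have heq : (fun ε : ℝ => if i ∈ s then (1 : ℝ) else ε) = fun ε => ε := by
            funext ε; exact if_neg h
          rw [heq]; exact continuous_id
      have htend : Filter.Tendsto g (nhdsWithin 0 (Set.Ioi 0)) (nhds (g 0)) :=
        (hcont.tendsto 0).mono_left nhdsWithin_le_nhds
      have h0le : 0 ≤ g 0 :=
        ge_of_tendsto htend (eventually_nhdsWithin_of_forall fun x hx => (hgpos x hx).le)
      rw [hg0] at h0le
      exact h0le
  · intro k hk1 hkn
    have h := key_sum_pos A hA (fun _ => (1 : ℝ)) (fun _ => one_pos) hkn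
    simpa using h
end

section
/- Let A be a real n×n matrix with a_nn ≠ 0 such that det(A|_n + iD') ≠ 0 and det(A|_n − iD') ≠ 0 for every (n−1)×(n−1) real diagonal matrix D' with strictly positive diagonal entries. Then for every n×n real diagonal matrix D with strictly positive diagonal entries, writing D = diag(D|_n, d_nn), the equality det(A ± iD) = ± i d_nn det(A|_n ± iD|_n) + a_nn det(A|_{a_nn} ± i D|_n) holds (for both choices of sign), where A|_{a_nn} is the Schur complement of a_nn in A. -/
open Matrix

lemma det_add_stdBasis {n : ℕ} (B : Matrix (Fin (n+1)) (Fin (n+1)) ℂ) (w : ℂ) :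
    (B + w • Matrix.single (Fin.last n) (Fin.last n) 1).det
      = w * (B.submatrix Fin.castSucc Fin.castSucc).det + B.det := by
  have h : B + w • Matrix.single (Fin.last n) (Fin.last n) 1
      = B.updateCol (Fin.last n)
          ((fun i => B i (Fin.last n)) + w • (Pi.single (Fin.last n) 1 : Fin (n+1) → ℂ)) := by
    ext i j
    by_cases hj : j = Fin.last n
    · subst hj
      by_cases hi : i = Fin.last n
      · simp [updateCol_apply, Matrix.single, Pi.single_apply, hi]
      · simp only [updateCol_apply, Matrix.single, Pi.single_apply, hi,
          if_true, if_false, Matrix.add_apply, Matrix.smul_apply, of_apply, Pi.add_apply,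
          Pi.smul_apply, smul_eq_mul, if_neg hi, mul_ite, mul_one, mul_zero]
        rw [if_neg (fun h : Fin.last n = i ∧ _ => hi h.1.symm), add_zero]
    · simp [updateCol_apply, hj, Matrix.single, Ne.symm hj]
  have h2 : (B.updateCol (Fin.last n) (Pi.single (Fin.last n) 1)).det
      = (B.submatrix Fin.castSucc Fin.castSucc).det := by
    rw [det_succ_column _ (Fin.last n), Finset.sum_eq_single (Fin.last n)]
    · have hsign : ((-1 : ℂ)) ^ ((Fin.last n : ℕ) + (Fin.last n : ℕ)) = 1 :=
        Even.neg_one_pow ⟨n, by simp [Fin.last]⟩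
      have hsub : ((B.updateCol (Fin.last n) (Pi.single (Fin.last n) 1)).submatrix
          (Fin.last n).succAbove (Fin.last n).succAbove)
          = B.submatrix Fin.castSucc Fin.castSucc := by
        ext i j
        simp [Fin.succAbove_last, updateCol_apply, (Fin.castSucc_lt_last j).ne]
      rw [hsub, hsign]
      simp [updateCol_apply]
    · intro i _ hi
      simp [updateCol_apply, Pi.single_apply, hi]
    · simp
  rw [h, det_updateCol_add, updateCol_eq_self, det_updateCol_smul, h2, add_comm]

lemma det_eq_schur {n : ℕ} (B : Matrix (Fin (n+1)) (Fin (n+1)) ℂ)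
    (hc : B (Fin.last n) (Fin.last n) ≠ 0) :
    B.det = B (Fin.last n) (Fin.last n) *
      (B.submatrix Fin.castSucc Fin.castSucc -
        (B (Fin.last n) (Fin.last n))⁻¹ •
          Matrix.vecMulVec (fun i => B (Fin.castSucc i) (Fin.last n))
            (fun j => B (Fin.last n) (Fin.castSucc j))).det := by
  set c := B (Fin.last n) (Fin.last n) with hcdef
  have hlast : ∀ j : Fin 1, (finSumFinEquiv (Sum.inr j) : Fin (n+1)) = Fin.last n := by
    intro j
    have : j = 0 := Subsingleton.elim _ _
    subst this
    simp [finSumFinEquiv, Fin.natAdd, Fin.last]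
  have hcs : ∀ i : Fin n, (finSumFinEquiv (Sum.inl i) : Fin (n+1)) = Fin.castSucc i := by
    intro i; rfl
  have hB : B.submatrix finSumFinEquiv finSumFinEquiv =
      fromBlocks (B.submatrix Fin.castSucc Fin.castSucc)
        (Matrix.of fun i (_ : Fin 1) => B (Fin.castSucc i) (Fin.last n))
        (Matrix.of fun (_ : Fin 1) j => B (Fin.last n) (Fin.castSucc j))
        (Matrix.of fun (_ _ : Fin 1) => c) := by
    ext i j
    cases i <;> cases j <;>
      simp [fromBlocks, submatrix_apply, hlast, hcs, hcdef]
  have hone : (Matrix.of fun (_ _ : Fin 1) => c) * (Matrix.of fun (_ _ : Fin 1) => c⁻¹) = 1 := by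
    ext i j
    have : i = j := Subsingleton.elim _ _
    subst this
    simp [mul_apply, Fin.sum_univ_one, mul_inv_cancel₀ hc, one_apply]
  letI hInv : Invertible (Matrix.of fun (_ _ : Fin 1) => c) :=
    invertibleOfRightInverse _ _ hone
  have hio : ⅟(Matrix.of fun (_ _ : Fin 1) => c) = Matrix.of fun _ _ => c⁻¹ :=
    invOf_eq_right_inv hone
  rw [← det_submatrix_equiv_self finSumFinEquiv, hB, det_fromBlocks₂₂, hio]
  congr 1
  · simp [det_fin_one]
  · congr 1
    ext i j
    simp [mul_apply, Fin.sum_univ_one, vecMulVec_apply]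
    ring

lemma key_expansion {n : ℕ} (A : Matrix (Fin (n + 1)) (Fin (n + 1)) ℝ)
    (hnn : A (Fin.last n) (Fin.last n) ≠ 0) (d : Fin (n + 1) → ℝ) (ε : ℂ) :
    (A.map (Complex.ofReal : ℝ → ℂ) + ε • Matrix.diagonal (fun i => (d i : ℂ))).det =
      ε * (d (Fin.last n) : ℂ) *
        ((A.submatrix Fin.castSucc Fin.castSucc).map (Complex.ofReal : ℝ → ℂ) +
          ε • Matrix.diagonal (fun i : Fin n => (d i.castSucc : ℂ))).det +
      (A (Fin.last n) (Fin.last n) : ℂ) *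
        ((A.submatrix Fin.castSucc Fin.castSucc -
            (A (Fin.last n) (Fin.last n))⁻¹ •
              Matrix.vecMulVec (fun i => A (Fin.castSucc i) (Fin.last n))
                (fun j => A (Fin.last n) (Fin.castSucc j))).map
            (Complex.ofReal : ℝ → ℂ) +
          ε • Matrix.diagonal (fun i : Fin n => (d i.castSucc : ℂ))).det := by
  set d0 : Fin (n + 1) → ℂ := fun i => if i = Fin.last n then 0 else (d i : ℂ) with hd0
  set B : Matrix (Fin (n + 1)) (Fin (n + 1)) ℂ :=
    A.map (Complex.ofReal : ℝ → ℂ) + ε • Matrix.diagonal d0 with hBdef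
  have h1 : A.map (Complex.ofReal : ℝ → ℂ) + ε • Matrix.diagonal (fun i => (d i : ℂ)) =
      B + (ε * (d (Fin.last n) : ℂ)) • Matrix.single (Fin.last n) (Fin.last n) 1 := by
    ext i j
    by_cases hij : i = j
    · subst hij
      by_cases hi : i = Fin.last n
      · simp [hBdef, hd0, Matrix.single, diagonal_apply, hi, mul_comm]
      · have hi' : Fin.last n ≠ i := fun h => hi h.symm
        simp [hBdef, hd0, Matrix.single, diagonal_apply, hi, hi']
    · have hij' : ¬(Fin.last n = i ∧ Fin.last n = j) :=
        fun h => hij (h.1.symm.trans h.2)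
      simp [hBdef, hd0, Matrix.single, diagonal_apply_ne _ hij, hij']
  have hsubm : B.submatrix Fin.castSucc Fin.castSucc =
      (A.submatrix Fin.castSucc Fin.castSucc).map (Complex.ofReal : ℝ → ℂ) +
        ε • Matrix.diagonal (fun i : Fin n => (d i.castSucc : ℂ)) := by
    ext i j
    by_cases hij : i = j
    · subst hij
      simp [hBdef, hd0, diagonal_apply, (Fin.castSucc_lt_last i).ne]
    · simp [hBdef, diagonal_apply_ne _ hij, diagonal_apply_ne _
        (fun h : Fin.castSucc i = Fin.castSucc j => hij (Fin.castSucc_injective n h))]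
  have hBlast : B (Fin.last n) (Fin.last n) = (A (Fin.last n) (Fin.last n) : ℂ) := by
    simp [hBdef, hd0]
  have hBcol : ∀ i : Fin n, B (Fin.castSucc i) (Fin.last n) =
      (A (Fin.castSucc i) (Fin.last n) : ℂ) := by
    intro i
    simp [hBdef, diagonal_apply_ne _ (Fin.castSucc_lt_last i).ne]
  have hBrow : ∀ j : Fin n, B (Fin.last n) (Fin.castSucc j) =
      (A (Fin.last n) (Fin.castSucc j) : ℂ) := by
    intro j
    simp [hBdef, diagonal_apply_ne _ (Fin.castSucc_lt_last j).ne.symm]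
  have hBlast' : B (Fin.last n) (Fin.last n) ≠ 0 := by
    rw [hBlast]; exact_mod_cast hnn
  rw [h1, det_add_stdBasis, det_eq_schur B hBlast', hsubm, hBlast]
  congr 3
  have hv1 : (fun i => B (Fin.castSucc i) (Fin.last n))
      = fun i => (A (Fin.castSucc i) (Fin.last n) : ℂ) := funext hBcol
  have hv2 : (fun j => B (Fin.last n) (Fin.castSucc j))
      = fun j => (A (Fin.last n) (Fin.castSucc j) : ℂ) := funext hBrow
  rw [hv1, hv2]
  ext i j
  by_cases hij : i = j
  · subst hij
    simp [vecMulVec_apply, diagonal_apply, Complex.ofReal_inv]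
    ring
  · simp [vecMulVec_apply, diagonal_apply_ne _ hij, Complex.ofReal_inv,
      diagonal_apply_ne _
        (fun h : Fin.castSucc i = Fin.castSucc j => hij (Fin.castSucc_injective n h))]

/-- The determinant expansion `det(A ± iD) = ± i d_nn det(A|_n ± i D|_n)
+ a_nn det(A|_{a_nn} ± i D|_n)`, valid whenever `a_nn ≠ 0` and
`det(A|_n ± i D') ≠ 0` for every positive diagonal `D'`. -/
theorem det_add_smul_I_expansion {n : ℕ}
    (A : Matrix (Fin (n + 1)) (Fin (n + 1)) ℝ)
    (hnn : A (Fin.last n) (Fin.last n) ≠ 0)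
    (hsub : ∀ d' : Fin n → ℝ, (∀ i, 0 < d' i) →
      ((A.submatrix Fin.castSucc Fin.castSucc).map (Complex.ofReal : ℝ → ℂ) +
          Complex.I • Matrix.diagonal (fun i => (d' i : ℂ))).det ≠ 0 ∧
      ((A.submatrix Fin.castSucc Fin.castSucc).map (Complex.ofReal : ℝ → ℂ) -
          Complex.I • Matrix.diagonal (fun i => (d' i : ℂ))).det ≠ 0) :
    ∀ d : Fin (n + 1) → ℝ, (∀ i, 0 < d i) →
      (A.map (Complex.ofReal : ℝ → ℂ) +
          Complex.I • Matrix.diagonal (fun i => (d i : ℂ))).det =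
        Complex.I * (d (Fin.last n) : ℂ) *
          ((A.submatrix Fin.castSucc Fin.castSucc).map (Complex.ofReal : ℝ → ℂ) +
            Complex.I • Matrix.diagonal (fun i : Fin n => (d i.castSucc : ℂ))).det +
        (A (Fin.last n) (Fin.last n) : ℂ) *
          ((A.submatrix Fin.castSucc Fin.castSucc -
              (A (Fin.last n) (Fin.last n))⁻¹ •
                Matrix.vecMulVec (fun i => A (Fin.castSucc i) (Fin.last n))
                  (fun j => A (Fin.last n) (Fin.castSucc j))).map
              (Complex.ofReal : ℝ → ℂ) +
            Complex.I • Matrix.diagonal (fun i : Fin n => (d i.castSucc : ℂ))).det ∧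
      (A.map (Complex.ofReal : ℝ → ℂ) -
          Complex.I • Matrix.diagonal (fun i => (d i : ℂ))).det =
        -(Complex.I * (d (Fin.last n) : ℂ)) *
          ((A.submatrix Fin.castSucc Fin.castSucc).map (Complex.ofReal : ℝ → ℂ) -
            Complex.I • Matrix.diagonal (fun i : Fin n => (d i.castSucc : ℂ))).det +
        (A (Fin.last n) (Fin.last n) : ℂ) *
          ((A.submatrix Fin.castSucc Fin.castSucc -
              (A (Fin.last n) (Fin.last n))⁻¹ •
                Matrix.vecMulVec (fun i => A (Fin.castSucc i) (Fin.last n))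
                  (fun j => A (Fin.last n) (Fin.castSucc j))).map
              (Complex.ofReal : ℝ → ℂ) -
            Complex.I • Matrix.diagonal (fun i : Fin n => (d i.castSucc : ℂ))).det := by
  intro d _hd
  refine ⟨key_expansion A hnn d Complex.I, ?_⟩
  have h := key_expansion A hnn d (-Complex.I)
  simp only [neg_smul, ← sub_eq_add_neg] at h
  rw [h]
  ring
end

section
/- Let A be a real n×n matrix and D an n×n real diagonal matrix with diagonal entries d_1,…,d_n. Then the real part of det(A + iD) (computed over the complex numbers) equals the sum over all subsets S ⊆ {1,…,n} of even cardinality |S| = 2p of (−1)^p · A({1,…,n}\S) · Π_{i∈S} d_i, where A(α) denotes the principal minor of A on the index set α and A(∅) = 1. -/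
open Matrix Finset

lemma det_inst_irrel {m : Type*} [DecidableEq m] (inst1 inst2 : Fintype m)
    {R : Type*} [CommRing R] (M : Matrix m m R) :
    @Matrix.det m _ inst1 R _ M = @Matrix.det m _ inst2 R _ M := by
  congr!

lemma piece_det {n : ℕ} (A : Matrix (Fin n) (Fin n) ℝ) (d : Fin n → ℝ) (s : Finset (Fin n)) :
    (Matrix.det (s.piecewise (Complex.I • Matrix.diagonal (fun i => (d i : ℂ)))
        (A.map (Complex.ofReal : ℝ → ℂ)) : Matrix (Fin n) (Fin n) ℂ))
      = Complex.I ^ s.card * (∏ i ∈ s, (d i : ℂ)) *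
          ((principalMinor A (univ \ s) : ℝ) : ℂ) := by
  set M : Matrix (Fin n) (Fin n) ℂ := s.piecewise
        (Complex.I • Matrix.diagonal (fun i => (d i : ℂ)))
        (A.map (Complex.ofReal : ℝ → ℂ)) with hM
  have h0 : ∀ i, i ∈ s → ∀ j, ¬ j ∈ s → M i j = 0 := by
    intro i hi j hj
    have h : M i = (Complex.I • Matrix.diagonal (fun i => (d i : ℂ))) i :=
      s.piecewise_eq_of_mem _ _ hi
    rw [h]
    have hij : i ≠ j := fun h => hj (h ▸ hi)
    simp [Matrix.diagonal_apply_ne _ hij]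
  rw [Matrix.twoBlockTriangular_det' M (· ∈ s) h0]
  have h1 : M.toSquareBlockProp (· ∈ s)
      = Matrix.diagonal (fun i : {a // a ∈ s} => Complex.I * d i) := by
    ext i j
    have h : M i = (Complex.I • Matrix.diagonal (fun i => (d i : ℂ))) i :=
      s.piecewise_eq_of_mem _ _ i.2
    show M i j = _
    rw [h]
    rcases eq_or_ne i j with rfl | hij
    · simp
    · have hij' : (i : Fin n) ≠ (j : Fin n) := fun h => hij (Subtype.ext h)
      simp [Matrix.diagonal_apply_ne _ hij, Matrix.diagonal_apply_ne _ hij']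
  have h2 : M.toSquareBlockProp (fun i => ¬ i ∈ s)
      = (A.map (Complex.ofReal : ℝ → ℂ)).toSquareBlockProp (fun i => ¬ i ∈ s) := by
    ext i j
    show M i j = _
    have h : M i = (A.map (Complex.ofReal : ℝ → ℂ)) i := s.piecewise_eq_of_notMem _ _ i.2
    rw [h]; rfl
  rw [h1, h2]
  have huniv : ∀ (inst : Fintype {a // a ∈ s}), @Finset.univ _ inst = s.attach := by
    intro inst; ext x; simp
  have hdd : ∀ (inst : Fintype {a // a ∈ s}),
      @Matrix.det _ _ inst _ _ (Matrix.diagonal (fun i : {a // a ∈ s} => Complex.I * d i))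
        = Complex.I ^ s.card * ∏ i ∈ s, (d i : ℂ) := by
    intro inst
    rw [Matrix.det_diagonal, huniv inst, Finset.prod_mul_distrib, Finset.prod_const,
      Finset.card_attach, Finset.prod_attach s (fun i => (d i : ℂ))]
  rw [hdd]
  congr 1
  have h4 : (A.map (Complex.ofReal : ℝ → ℂ)).toSquareBlockProp (fun i => ¬ i ∈ s)
      = (A.toSquareBlockProp (fun i => ¬ i ∈ s)).map (Complex.ofReal : ℝ → ℂ) := rfl
  rw [h4]
  rw [show ((A.toSquareBlockProp (fun i => ¬ i ∈ s)).map (Complex.ofReal : ℝ → ℂ)).det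
      = ((A.toSquareBlockProp (fun i => ¬ i ∈ s)).det : ℂ) from
    (RingHom.map_det (algebraMap ℝ ℂ) _).symm]
  norm_cast
  rw [Matrix.equiv_block_det _ (fun x => show x ∈ univ \ s ↔ ¬ x ∈ s by simp)]
  exact det_inst_irrel _ _ _

/-- The real part of `det(A + iD)`:
`Re det(A + iD) = Σ_{|S| even, |S| = 2p} (-1)^p A([n] \ S) Π_{i ∈ S} d_i`. -/
theorem re_det_add_smul_I {n : ℕ} (A : Matrix (Fin n) (Fin n) ℝ) (d : Fin n → ℝ) :
    ((A.map (Complex.ofReal : ℝ → ℂ) +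
        Complex.I • Matrix.diagonal (fun i => (d i : ℂ))).det).re =
      ∑ S ∈ (Finset.univ : Finset (Fin n)).powerset.filter (fun S => S.card % 2 = 0),
        (-1 : ℝ) ^ (S.card / 2) * principalMinor A (Finset.univ \ S) *
          ∏ i ∈ S, d i := by
  have expand : (A.map (Complex.ofReal : ℝ → ℂ) +
        Complex.I • Matrix.diagonal (fun i => (d i : ℂ))).det
      = ∑ s : Finset (Fin n), Complex.I ^ s.card * (∏ i ∈ s, (d i : ℂ)) *
          ((principalMinor A (univ \ s) : ℝ) : ℂ) := by
    rw [add_comm]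
    have h := MultilinearMap.map_add_univ
      (Matrix.detRowAlternating (n := Fin n) (R := ℂ)).toMultilinearMap
      (Complex.I • Matrix.diagonal (fun i => (d i : ℂ)))
      (A.map (Complex.ofReal : ℝ → ℂ))
    exact h.trans (Finset.sum_congr rfl fun s _ => piece_det A d s)
  rw [expand, Complex.re_sum, Finset.powerset_univ,
    ← Finset.sum_filter_add_sum_filter_not (univ : Finset (Finset (Fin n)))
      (fun S => S.card % 2 = 0)]
  have hodd : ∑ s ∈ (univ : Finset (Finset (Fin n))).filter (fun S => ¬ S.card % 2 = 0),
      (Complex.I ^ s.card * (∏ i ∈ s, (d i : ℂ)) *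
        ((principalMinor A (univ \ s) : ℝ) : ℂ)).re = 0 := by
    apply Finset.sum_eq_zero
    intro s hs
    simp only [Finset.mem_filter] at hs
    obtain ⟨m, hm⟩ := Nat.odd_iff.mpr (Nat.mod_two_ne_zero.mp hs.2)
    have him : ((-1:ℂ)^m).im = 0 := by
      rcases Nat.even_or_odd m with he|ho
      · rw [he.neg_one_pow]; simp
      · rw [ho.neg_one_pow]; simp
    rw [hm, pow_add, pow_mul, Complex.I_sq, pow_one]
    simp [Complex.mul_re, Complex.mul_im, him]
    left; right; rw [← Complex.ofReal_prod, Complex.ofReal_im]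
  rw [hodd, add_zero]
  apply Finset.sum_congr rfl
  intro s hs
  simp only [Finset.mem_filter] at hs
  have h2 : s.card = 2 * (s.card / 2) := (Nat.div_mul_cancel (Nat.dvd_of_mod_eq_zero hs.2)).symm ▸ (Nat.two_mul_div_two_of_even (Nat.even_iff.mpr hs.2)).symm
  conv_lhs => rw [h2]
  rw [pow_mul, Complex.I_sq,
    show ((-1:ℂ)) = ((-1:ℝ):ℂ) by norm_num, ← Complex.ofReal_pow, ← Complex.ofReal_prod,
    ← Complex.ofReal_mul, ← Complex.ofReal_mul, Complex.ofReal_re]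
  ring
end

section
/- Let A be a real n×n matrix and D an n×n real diagonal matrix with diagonal entries d_1,…,d_n. Then the imaginary part of det(A + iD) (computed over the complex numbers) equals the sum over all subsets S ⊆ {1,…,n} of odd cardinality |S| = 2p−1 of (−1)^{p−1} · A({1,…,n}\S) · Π_{i∈S} d_i, where A(α) denotes the principal minor of A on the index set α and A(∅) = 1. -/
open Matrix Finset

lemma det_piecewise_aux {n : ℕ} (A : Matrix (Fin n) (Fin n) ℝ) (d : Fin n → ℝ)
    (s : Finset (Fin n)) :
    Matrix.det (s.piecewise
        ((Complex.I • Matrix.diagonal (fun i => (d i : ℂ)) : Matrix (Fin n) (Fin n) ℂ))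
        (A.map (Complex.ofReal : ℝ → ℂ)) : Matrix (Fin n) (Fin n) ℂ) =
      Complex.I ^ s.card * ((∏ i ∈ s, d i : ℝ) : ℂ) *
        ((principalMinor A (Finset.univ \ s) : ℝ) : ℂ) := by
  set M : Matrix (Fin n) (Fin n) ℂ := s.piecewise
      ((Complex.I • Matrix.diagonal (fun i => (d i : ℂ)) : Matrix (Fin n) (Fin n) ℂ))
      (A.map (Complex.ofReal : ℝ → ℂ)) with hM
  have h0 : ∀ i, i ∈ s → ∀ j, ¬ j ∈ s → M i j = 0 := by
    intro i hi j hj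
    have hij : i ≠ j := fun h => hj (h ▸ hi)
    simp [hM, Finset.piecewise, hi, Matrix.diagonal_apply_ne _ hij]
  rw [Matrix.twoBlockTriangular_det' M (· ∈ s) h0]
  have h1 : Matrix.toSquareBlockProp M (fun i => i ∈ s) =
      Matrix.diagonal (fun i : {a // a ∈ s} => Complex.I * (d i : ℂ)) := by
    ext i j
    by_cases h : i = j
    · subst h
      simp [hM, Matrix.toSquareBlockProp, Matrix.toBlock, Matrix.submatrix, Matrix.of_apply,
        Finset.piecewise, Matrix.submatrix_apply]
    · have h' : (i : Fin n) ≠ (j : Fin n) := fun hh => h (Subtype.ext hh)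
      simp [hM, Matrix.toSquareBlockProp, Matrix.toBlock, Matrix.submatrix, Matrix.of_apply,
        Finset.piecewise, Matrix.submatrix_apply, Matrix.diagonal_apply_ne _ h',
        Matrix.diagonal_apply_ne _ h]
  have h3 : Matrix.toSquareBlockProp M (fun i => ¬ i ∈ s) =
      ((A.submatrix (fun i : (Finset.univ \ s : Finset (Fin n)) => (i : Fin n))
          (fun j : (Finset.univ \ s : Finset (Fin n)) => (j : Fin n))).map
        (Complex.ofReal : ℝ → ℂ)).submatrix
        ⇑(Equiv.subtypeEquivRight (q := fun a => a ∈ Finset.univ \ s) (fun a => by simp))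
        ⇑(Equiv.subtypeEquivRight (q := fun a => a ∈ Finset.univ \ s) (fun a => by simp)) := by
    ext i j
    simp only [hM, Matrix.toSquareBlockProp, Matrix.toBlock, Matrix.submatrix, Matrix.of_apply, Matrix.submatrix_apply,
      Matrix.map_apply, Finset.piecewise, i.2, if_false,
      Equiv.subtypeEquivRight_apply]
  rw [h1, h3]
  simp only [Matrix.det_diagonal, Matrix.det_submatrix_equiv_self]
  rw [show (Complex.ofReal : ℝ → ℂ) = ⇑Complex.ofRealHom from rfl,
    ← RingHom.mapMatrix_apply, ← RingHom.map_det]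
  rw [← Finset.prod_subtype s (fun x => Iff.rfl)
      (fun i => Complex.I * Complex.ofRealHom (d i))]
  rw [Finset.prod_mul_distrib, Finset.prod_const]
  simp only [Complex.ofRealHom_eq_coe, principalMinor]
  push_cast
  ring

/-- The imaginary part of `det(A + iD)`:
`Im det(A + iD) = Σ_{|S| odd, |S| = 2p-1} (-1)^(p-1) A([n] \ S) Π_{i ∈ S} d_i`. -/
theorem im_det_add_smul_I {n : ℕ} (A : Matrix (Fin n) (Fin n) ℝ) (d : Fin n → ℝ) :
    ((A.map (Complex.ofReal : ℝ → ℂ) +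
        Complex.I • Matrix.diagonal (fun i => (d i : ℂ))).det).im =
      ∑ S ∈ (Finset.univ : Finset (Fin n)).powerset.filter (fun S => S.card % 2 = 1),
        (-1 : ℝ) ^ ((S.card - 1) / 2) * principalMinor A (Finset.univ \ S) *
          ∏ i ∈ S, d i := by
  have hexp : (A.map (Complex.ofReal : ℝ → ℂ) +
        Complex.I • Matrix.diagonal (fun i => (d i : ℂ))).det =
      ∑ s : Finset (Fin n), Complex.I ^ s.card * ((∏ i ∈ s, d i : ℝ) : ℂ) *
        ((principalMinor A (Finset.univ \ s) : ℝ) : ℂ) := by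
    have := MultilinearMap.map_add_univ
      (Matrix.detRowAlternating : (Fin n → ℂ) [⋀^Fin n]→ₗ[ℂ] ℂ).toMultilinearMap
      ((Complex.I • Matrix.diagonal (fun i => (d i : ℂ)) : Matrix (Fin n) (Fin n) ℂ))
      (A.map (Complex.ofReal : ℝ → ℂ))
    rw [add_comm]
    calc (Complex.I • Matrix.diagonal (fun i => (d i : ℂ)) +
          A.map (Complex.ofReal : ℝ → ℂ)).det
        = ∑ s : Finset (Fin n), Matrix.det (s.piecewise
            ((Complex.I • Matrix.diagonal (fun i => (d i : ℂ)) : Matrix (Fin n) (Fin n) ℂ))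
            (A.map (Complex.ofReal : ℝ → ℂ))) := this
      _ = _ := by
          refine Finset.sum_congr rfl fun s _ => ?_
          exact det_piecewise_aux A d s
  rw [hexp, Complex.im_sum]
  rw [← Finset.powerset_univ, Finset.sum_filter]
  refine Finset.sum_congr rfl fun s _ => ?_
  by_cases h : s.card % 2 = 1
  · rw [if_pos h]
    obtain ⟨q, hq⟩ : ∃ q, s.card = 2 * q + 1 := ⟨s.card / 2, by omega⟩
    have hI : Complex.I ^ s.card = ((-1 : ℝ) ^ q : ℝ) * Complex.I := by
      rw [hq, pow_succ, pow_mul, Complex.I_sq]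
      push_cast
      ring
    rw [hI]
    have : ((-1 : ℝ) ^ q : ℝ) * Complex.I * ((∏ i ∈ s, d i : ℝ) : ℂ) *
        ((principalMinor A (Finset.univ \ s) : ℝ) : ℂ) =
        Complex.I * ((((-1 : ℝ) ^ q * principalMinor A (Finset.univ \ s) *
          ∏ i ∈ s, d i : ℝ)) : ℂ) := by
      push_cast; ring
    rw [this]
    rw [Complex.I_mul_im, Complex.ofReal_re]
    have hq2 : (s.card - 1) / 2 = q := by omega
    rw [hq2]
  · rw [if_neg h]
    have h2 : s.card % 2 = 0 := by omega
    obtain ⟨q, hq⟩ : ∃ q, s.card = 2 * q := ⟨s.card / 2, by omega⟩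
    have hI : Complex.I ^ s.card = ((-1 : ℝ) ^ q : ℝ) := by
      rw [hq, pow_mul, Complex.I_sq]; push_cast; ring
    rw [hI]
    have : (((-1 : ℝ) ^ q : ℝ) : ℂ) * ((∏ i ∈ s, d i : ℝ) : ℂ) *
        ((principalMinor A (Finset.univ \ s) : ℝ) : ℂ) =
        ((((-1 : ℝ) ^ q * (∏ i ∈ s, d i) * principalMinor A (Finset.univ \ s) : ℝ)) : ℂ) := by
      push_cast; ring
    rw [this, Complex.ofReal_im]
end

section
/- Let A = {a_ij} be a real 3×3 Hurwitz stable matrix such that −A is a P-matrix. Then A is D-stable if at least one of the following three inequalities holds: (1) −A({1,2}) + (a_11/a_33)·A({2,3}) + (a_22/a_33)·A({1,3}) − (1/a_33)·det A ≥ 0; (2) −A({1,3}) + (a_11/a_22)·A({2,3}) + (a_33/a_22)·A({1,2}) − (1/a_22)·det A ≥ 0; (3) −A({2,3}) + (a_22/a_11)·A({1,3}) + (a_33/a_11)·A({1,2}) − (1/a_11)·det A ≥ 0. -/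
open Matrix Finset

/-- A matrix is a P-matrix if all its (nonempty) principal minors are positive. -/
def IsPMatrix {m : ℕ} (A : Matrix (Fin m) (Fin m) ℝ) : Prop :=
  ∀ s : Finset (Fin m), s.Nonempty → 0 < principalMinor A s

/-- Routh–Hurwitz criterion for a cubic: if the coefficients are positive and `c < a * b`,
every complex root has negative real part. -/
lemma rh_cubic (a b c : ℝ) (μ : ℂ) (ha : 0 < a) (hb : 0 < b) (hc : 0 < c)
    (hab : c < a * b) (h : μ^3 + a*μ^2 + b*μ + c = 0) : μ.re < 0 := by
  by_contra hx
  push_neg at hx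
  set x := μ.re
  set y := μ.im
  have hre : x^3 - 3*x*y^2 + a*(x^2 - y^2) + b*x + c = 0 := by
    have := congrArg Complex.re h
    simp [Complex.ext_iff, pow_succ, Complex.add_re, Complex.mul_re, Complex.mul_im,
      Complex.ofReal_re, Complex.ofReal_im] at this
    ring_nf at this ⊢
    linarith
  have him : y * (3*x^2 - y^2 + 2*a*x + b) = 0 := by
    have := congrArg Complex.im h
    simp [Complex.ext_iff, pow_succ, Complex.add_im, Complex.mul_re, Complex.mul_im,
      Complex.ofReal_re, Complex.ofReal_im] at this
    ring_nf at this ⊢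
    linarith
  rcases mul_eq_zero.mp him with hy | hy
  · rw [hy] at hre; nlinarith
  · nlinarith [mul_nonneg (mul_nonneg ha.le hx) hx, mul_nonneg (mul_nonneg ha.le ha.le) hx,
      mul_nonneg hb.le hx, mul_nonneg (mul_nonneg hx hx) hx, mul_nonneg hx (sq_nonneg y)]

lemma pm_eq {m k : ℕ} (A : Matrix (Fin m) (Fin m) ℝ) (s : Finset (Fin m)) (e : Fin k ≃ s) :
    principalMinor A s
      = (A.submatrix (fun i => ((e i : s) : Fin m)) (fun i => ((e i : s) : Fin m))).det := by
  unfold principalMinor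
  rw [← Matrix.det_submatrix_equiv_self e]
  rfl

lemma pm_single (A : Matrix (Fin 3) (Fin 3) ℝ) (i : Fin 3) :
    principalMinor A {i} = A i i := by
  rw [pm_eq A {i} (Equiv.ofBijective (fun _ : Fin 1 => (⟨i, by simp⟩ : ({i} : Finset (Fin 3)))) (by
    constructor
    · intro a b _; exact Subsingleton.elim a b
    · rintro ⟨x, hx⟩; exact ⟨0, by simpa using (Finset.mem_singleton.mp hx).symm⟩))]
  simp [Matrix.det_fin_one]
  rfl

set_option linter.unreachableTactic false in
set_option linter.unusedTactic false in
lemma pm_pair (A : Matrix (Fin 3) (Fin 3) ℝ) (i j : Fin 3) (hij : i ≠ j) :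
    principalMinor A {i, j} = A i i * A j j - A i j * A j i := by
  rw [pm_eq A {i, j} (Equiv.ofBijective
    (fun k : Fin 2 => (⟨![i,j] k, by fin_cases k <;> simp⟩ : ({i, j} : Finset (Fin 3)))) (by
      constructor
      · intro a b hab
        fin_cases a <;> fin_cases b <;>
          simp_all [Subtype.ext_iff] <;>
          first | rfl | exact (hij hab).elim | exact (hij hab.symm).elim
      · rintro ⟨x, hx⟩
        rcases Finset.mem_insert.mp hx with h | h
        · exact ⟨0, by simp [h]⟩
        · exact ⟨1, by simp [Finset.mem_singleton.mp h]⟩))]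
  simp [Matrix.det_fin_two]
  rfl

lemma pm_all (A : Matrix (Fin 3) (Fin 3) ℝ) :
    principalMinor A {0, 1, 2} = A.det := by
  rw [pm_eq A {0,1,2} (Equiv.ofBijective
    (fun k : Fin 3 => (⟨k, by fin_cases k <;> decide⟩ : ({0,1,2} : Finset (Fin 3)))) (by
      constructor
      · intro a b hab; simpa [Subtype.ext_iff] using hab
      · rintro ⟨x, hx⟩; exact ⟨x, rfl⟩))]
  simp [Matrix.det_fin_three]
  rfl

set_option maxHeartbeats 1600000 in
/-- A stable `3 × 3` matrix `A` with `-A` a P-matrix is D-stable provided at least one of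
three determinantal inequalities holds. -/
theorem dStable_of_three_by_three {A : Matrix (Fin 3) (Fin 3) ℝ}
    (hA : IsHurwitzStable A) (hP : IsPMatrix (-A)) :
    (-principalMinor A {0, 1} + (A 0 0 / A 2 2) * principalMinor A {1, 2} +
        (A 1 1 / A 2 2) * principalMinor A {0, 2} - (1 / A 2 2) * A.det ≥ 0) ∨
    (-principalMinor A {0, 2} + (A 0 0 / A 1 1) * principalMinor A {1, 2} +
        (A 2 2 / A 1 1) * principalMinor A {0, 1} - (1 / A 1 1) * A.det ≥ 0) ∨
    (-principalMinor A {1, 2} + (A 1 1 / A 0 0) * principalMinor A {0, 2} +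
        (A 2 2 / A 0 0) * principalMinor A {0, 1} - (1 / A 0 0) * A.det ≥ 0) →
    IsDStable A := by
  intro h d hd μ hμ
  -- basic quantities
  set p0 : ℝ := -A 0 0 with hp0def
  set p1 : ℝ := -A 1 1 with hp1def
  set p2 : ℝ := -A 2 2 with hp2def
  set m01 : ℝ := A 0 0 * A 1 1 - A 0 1 * A 1 0 with hm01def
  set m02 : ℝ := A 0 0 * A 2 2 - A 0 2 * A 2 0 with hm02def
  set m12 : ℝ := A 1 1 * A 2 2 - A 1 2 * A 2 1 with hm12def
  set δ : ℝ := -A.det with hδdef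
  -- positivity from the P-matrix hypothesis
  have hp0 : 0 < p0 := by
    have := hP {0} ⟨0, by simp⟩; rw [pm_single] at this; simp only [Matrix.neg_apply] at this; linarith
  have hp1 : 0 < p1 := by
    have := hP {1} ⟨1, by simp⟩; rw [pm_single] at this; simp only [Matrix.neg_apply] at this; linarith
  have hp2 : 0 < p2 := by
    have := hP {2} ⟨2, by simp⟩; rw [pm_single] at this; simp only [Matrix.neg_apply] at this; linarith
  have hm01 : 0 < m01 := by
    have := hP {0, 1} ⟨0, by simp⟩; rw [pm_pair _ _ _ (by decide)] at this
    simp only [Matrix.neg_apply] at this; rw [hm01def]; linarith [this]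
  have hm02 : 0 < m02 := by
    have := hP {0, 2} ⟨0, by simp⟩; rw [pm_pair _ _ _ (by decide)] at this
    simp only [Matrix.neg_apply] at this; rw [hm02def]; linarith [this]
  have hm12 : 0 < m12 := by
    have := hP {1, 2} ⟨1, by simp⟩; rw [pm_pair _ _ _ (by decide)] at this
    simp only [Matrix.neg_apply] at this; rw [hm12def]; linarith [this]
  have hδ : 0 < δ := by
    have := hP {0, 1, 2} ⟨0, by simp⟩; rw [pm_all] at this
    rw [Matrix.det_neg] at this
    simp only [Fintype.card_fin] at this
    rw [hδdef]; nlinarith [this]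
  have ha00 : A 0 0 ≠ 0 := by intro hh; rw [hp0def, hh] at hp0; simp at hp0
  have ha11 : A 1 1 ≠ 0 := by intro hh; rw [hp1def, hh] at hp1; simp at hp1
  have ha22 : A 2 2 ≠ 0 := by intro hh; rw [hp2def, hh] at hp2; simp at hp2
  -- the key inequality: each of the three hypotheses gives it
  have hkey : 0 < p0 * m12 + p1 * m02 + p2 * m01 - δ := by
    rw [pm_pair _ _ _ (by decide : (0:Fin 3) ≠ 1), pm_pair _ _ _ (by decide : (1:Fin 3) ≠ 2),
      pm_pair _ _ _ (by decide : (0:Fin 3) ≠ 2)] at h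
    rcases h with h | h | h
    · have h2 : 0 ≤ p2 * (-(A 0 0 * A 1 1 - A 0 1 * A 1 0) +
          A 0 0 / A 2 2 * (A 1 1 * A 2 2 - A 1 2 * A 2 1) +
          A 1 1 / A 2 2 * (A 0 0 * A 2 2 - A 0 2 * A 2 0) - 1 / A 2 2 * A.det) :=
        mul_nonneg hp2.le h
      have e : p2 * (-(A 0 0 * A 1 1 - A 0 1 * A 1 0) +
          A 0 0 / A 2 2 * (A 1 1 * A 2 2 - A 1 2 * A 2 1) +
          A 1 1 / A 2 2 * (A 0 0 * A 2 2 - A 0 2 * A 2 0) - 1 / A 2 2 * A.det)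
          = p0 * m12 + p1 * m02 + p2 * m01 - δ - 2 * p2 * m01 := by
        rw [hp0def, hp1def, hp2def, hm01def, hm02def, hm12def, hδdef]
        field_simp
        ring
      rw [e] at h2
      nlinarith [mul_pos hp2 hm01]
    · have h2 : 0 ≤ p1 * (-(A 0 0 * A 2 2 - A 0 2 * A 2 0) +
          A 0 0 / A 1 1 * (A 1 1 * A 2 2 - A 1 2 * A 2 1) +
          A 2 2 / A 1 1 * (A 0 0 * A 1 1 - A 0 1 * A 1 0) - 1 / A 1 1 * A.det) :=
        mul_nonneg hp1.le h
      have e : p1 * (-(A 0 0 * A 2 2 - A 0 2 * A 2 0) +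
          A 0 0 / A 1 1 * (A 1 1 * A 2 2 - A 1 2 * A 2 1) +
          A 2 2 / A 1 1 * (A 0 0 * A 1 1 - A 0 1 * A 1 0) - 1 / A 1 1 * A.det)
          = p0 * m12 + p1 * m02 + p2 * m01 - δ - 2 * p1 * m02 := by
        rw [hp0def, hp1def, hp2def, hm01def, hm02def, hm12def, hδdef]
        field_simp
        ring
      rw [e] at h2
      nlinarith [mul_pos hp1 hm02]
    · have h2 : 0 ≤ p0 * (-(A 1 1 * A 2 2 - A 1 2 * A 2 1) +
          A 1 1 / A 0 0 * (A 0 0 * A 2 2 - A 0 2 * A 2 0) +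
          A 2 2 / A 0 0 * (A 0 0 * A 1 1 - A 0 1 * A 1 0) - 1 / A 0 0 * A.det) :=
        mul_nonneg hp0.le h
      have e : p0 * (-(A 1 1 * A 2 2 - A 1 2 * A 2 1) +
          A 1 1 / A 0 0 * (A 0 0 * A 2 2 - A 0 2 * A 2 0) +
          A 2 2 / A 0 0 * (A 0 0 * A 1 1 - A 0 1 * A 1 0) - 1 / A 0 0 * A.det)
          = p0 * m12 + p1 * m02 + p2 * m01 - δ - 2 * p0 * m12 := by
        rw [hp0def, hp1def, hp2def, hm01def, hm02def, hm12def, hδdef]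
        field_simp
        ring
      rw [e] at h2
      nlinarith [mul_pos hp0 hm12]
  -- coefficients of the characteristic polynomial of D * A
  set a : ℝ := d 0 * p0 + d 1 * p1 + d 2 * p2 with hadef
  set b : ℝ := d 0 * d 1 * m01 + d 0 * d 2 * m02 + d 1 * d 2 * m12 with hbdef
  set c : ℝ := d 0 * d 1 * d 2 * δ with hcdef
  have ha : 0 < a := by
    have := mul_pos (hd 0) hp0; have := mul_pos (hd 1) hp1; have := mul_pos (hd 2) hp2
    rw [hadef]; linarith
  have hb : 0 < b := by
    have := mul_pos (mul_pos (hd 0) (hd 1)) hm01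
    have := mul_pos (mul_pos (hd 0) (hd 2)) hm02
    have := mul_pos (mul_pos (hd 1) (hd 2)) hm12
    rw [hbdef]; linarith
  have hc : 0 < c := by
    rw [hcdef]; exact mul_pos (mul_pos (mul_pos (hd 0) (hd 1)) (hd 2)) hδ
  have hab : c < a * b := by
    have expand : a * b - c
        = d 0 * d 0 * d 1 * (p0 * m01) + d 0 * d 0 * d 2 * (p0 * m02)
        + d 0 * d 1 * d 1 * (p1 * m01) + d 1 * d 1 * d 2 * (p1 * m12)
        + d 0 * d 2 * d 2 * (p2 * m02) + d 1 * d 2 * d 2 * (p2 * m12)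
        + d 0 * d 1 * d 2 * (p0 * m12 + p1 * m02 + p2 * m01 - δ) := by
      rw [hadef, hbdef, hcdef]; ring
    nlinarith [mul_pos (mul_pos (mul_pos (hd 0) (hd 0)) (hd 1)) (mul_pos hp0 hm01),
      mul_pos (mul_pos (mul_pos (hd 0) (hd 0)) (hd 2)) (mul_pos hp0 hm02),
      mul_pos (mul_pos (mul_pos (hd 0) (hd 1)) (hd 1)) (mul_pos hp1 hm01),
      mul_pos (mul_pos (mul_pos (hd 1) (hd 1)) (hd 2)) (mul_pos hp1 hm12),
      mul_pos (mul_pos (mul_pos (hd 0) (hd 2)) (hd 2)) (mul_pos hp2 hm02),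
      mul_pos (mul_pos (mul_pos (hd 1) (hd 2)) (hd 2)) (mul_pos hp2 hm12),
      mul_pos (mul_pos (mul_pos (hd 0) (hd 1)) (hd 2)) hkey]
  -- translate the spectrum membership into the cubic equation
  rw [spectrum.mem_iff, Matrix.isUnit_iff_isUnit_det, isUnit_iff_ne_zero, not_ne_iff,
    Algebra.algebraMap_eq_smul_one, Matrix.det_fin_three] at hμ
  simp only [Matrix.sub_apply, Matrix.smul_apply, Matrix.one_apply, Matrix.map_apply,
    Matrix.diagonal_mul, smul_eq_mul] at hμ
  norm_num [Fin.ext_iff] at hμ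
  have hcubic : μ^3 + (a : ℂ) * μ^2 + (b : ℂ) * μ + (c : ℂ) = 0 := by
    rw [hadef, hbdef, hcdef, hp0def, hp1def, hp2def, hm01def, hm02def, hm12def, hδdef,
      Matrix.det_fin_three]
    push_cast
    linear_combination hμ
  exact rh_cubic a b c μ ha hb hc hab hcubic
end

section
/- For every real number q ≥ −1, the 3×3 real matrix A = [[−1, 0, q], [−1, −1, 0], [−1, −1, −1]] is D-stable. -/
/-!
For `D = diag(a, b, c)` with `a, b, c > 0`, the characteristic polynomial of `D * A` is
`λ³ + (a + b + c) λ² + (ab + bc + (1 + q) ac) λ + abc`. When `q ≥ -1` its coefficients are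
positive and `abc < (a + b + c)(ab + bc + (1 + q) ac)`, so the Routh–Hurwitz criterion for cubics
puts every root in the open left half-plane.
-/

open Matrix

/-- Routh–Hurwitz criterion for real cubics. -/
theorem Complex.re_neg_of_cubic_eq_zero {p r s : ℝ} (hp : 0 < p) (hr : 0 < r) (hs : 0 < s)
    (hprs : s < p * r) {μ : ℂ} (h : μ ^ 3 + p * μ ^ 2 + r * μ + s = 0) : μ.re < 0 := by
  set x := μ.re
  set y := μ.im
  have hre : x ^ 3 - 3 * x * y ^ 2 + p * (x ^ 2 - y ^ 2) + r * x + s = 0 := by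
    have := congrArg Complex.re h
    simp [pow_succ, Complex.mul_re, Complex.mul_im] at this
    linear_combination this
  have him : y * (3 * x ^ 2 - y ^ 2 + 2 * p * x + r) = 0 := by
    have := congrArg Complex.im h
    simp [pow_succ, Complex.mul_re, Complex.mul_im] at this
    linear_combination this
  by_contra! hx
  rcases mul_eq_zero.1 him with hy | hy
  · rw [hy] at hre
    nlinarith [pow_nonneg hx 3, mul_nonneg hp.le (sq_nonneg x), mul_nonneg hr.le hx]
  · -- eliminating `y²` leaves a cubic in `x` whose coefficients are all positive
    have : 8 * x ^ 3 + 8 * p * x ^ 2 + 2 * (r + p ^ 2) * x + (p * r - s) = 0 := by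
      linear_combination -hre + (3 * x + p) * hy
    nlinarith [pow_nonneg hx 3, mul_nonneg hp.le (sq_nonneg x), mul_nonneg hr.le hx,
      mul_nonneg (sq_nonneg p) hx]

namespace Matrix

/-- The coefficient of `λ` in the characteristic polynomial of a `3 × 3` matrix. -/
def principalMinorSum (M : Matrix (Fin 3) (Fin 3) ℝ) : ℝ :=
  M 0 0 * M 1 1 - M 0 1 * M 1 0 + M 0 0 * M 2 2 - M 0 2 * M 2 0 + M 1 1 * M 2 2 - M 1 2 * M 2 1

theorem cubic_eq_zero_of_mem_spectrum {M : Matrix (Fin 3) (Fin 3) ℝ} {μ : ℂ}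
    (hμ : μ ∈ spectrum ℂ (M.map Complex.ofReal)) :
    μ ^ 3 + (-M.trace : ℝ) * μ ^ 2 + (M.principalMinorSum : ℝ) * μ + (-M.det : ℝ) = 0 := by
  rw [mem_spectrum_iff_isRoot_charpoly, Polynomial.IsRoot, eval_charpoly, det_fin_three] at hμ
  simp [trace_fin_three, det_fin_three, principalMinorSum] at hμ ⊢
  linear_combination hμ

end Matrix

theorem isHurwitzStable_of_routhHurwitz {M : Matrix (Fin 3) (Fin 3) ℝ} (htr : M.trace < 0)
    (hminor : 0 < M.principalMinorSum) (hdet : M.det < 0)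
    (hrh : -M.det < -M.trace * M.principalMinorSum) : IsHurwitzStable M :=
  fun _ hμ => Complex.re_neg_of_cubic_eq_zero (neg_pos.2 htr) hminor (neg_pos.2 hdet) hrh
    (cubic_eq_zero_of_mem_spectrum hμ)

/-- For every `q ≥ -1`, the matrix `[[-1,0,q],[-1,-1,0],[-1,-1,-1]]` is D-stable. -/
theorem example_three_by_three_isDStable (q : ℝ) (hq : q ≥ -1) :
    IsDStable !![-1, 0, q; -1, -1, 0; -1, -1, -1] := by
  intro d hd
  obtain ⟨ha, hb, hc⟩ : 0 < d 0 ∧ 0 < d 1 ∧ 0 < d 2 := ⟨hd 0, hd 1, hd 2⟩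
  have hac : 0 ≤ (1 + q) * d 0 * d 2 := by
    have : 0 ≤ 1 + q := by linarith
    positivity
  set M := diagonal d * !![-1, 0, q; -1, -1, 0; -1, -1, -1]
  have htr : M.trace = -(d 0 + d 1 + d 2) := by
    simp [M, trace_fin_three]; ring
  have hminor : M.principalMinorSum = d 0 * d 1 + d 1 * d 2 + (1 + q) * d 0 * d 2 := by
    simp [M, principalMinorSum]; ring
  have hdet : M.det = -(d 0 * d 1 * d 2) := by
    simp [M, Fin.prod_univ_three, det_fin_three]
  refine isHurwitzStable_of_routhHurwitz (by linarith)
    (by rw [hminor]; linarith [mul_pos ha hb, mul_pos hb hc])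
    (by rw [hdet]; linarith [mul_pos (mul_pos ha hb) hc]) ?_
  rw [htr, hminor, hdet]
  nlinarith [mul_pos (mul_pos ha hb) (add_pos ha hb), mul_pos (mul_pos hb hc) (add_pos hb hc),
    mul_pos (mul_pos ha hb) hc, mul_nonneg (by positivity : (0 : ℝ) ≤ d 0 + d 1 + d 2) hac]
end

section
/- For every real number q ≥ 0, the 4×4 real matrix A = [[−1, 0, q, 2q], [−1, −1, 0, 0], [−1, −1, −1, 0], [−1, −1, −1, −1]] is D-stable. -/
/-!
For positive `d`, the characteristic polynomial of `diagonal d * A` is a quartic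
`z⁴ + a z³ + b z² + c z + e` with positive coefficients, and its Hurwitz determinant
`Δ = a b c - c² - a² e` is a polynomial in `d` and `q` with nonnegative coefficients (at `q = 0`
it is `∏_{i<j} (dᵢ + dⱼ)`), so the Routh–Hurwitz criterion for quartics applies.

The criterion itself comes from the identity
`a² p(z) = (a z² + c) (a z² + a² z + (a b - c)) - Δ`: at a root `z = x + i y` the two factors
have product `Δ > 0`. If `y ≠ 0` the vanishing imaginary part of that product makes the real parts
of the factors of opposite signs when `x ≥ 0`, contradicting the positive real part. A real root
`x ≥ 0` is excluded because then the factors are at least `c` and `a b - c > 0`, so their product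
exceeds `Δ = c (a b - c) - a² e`.
-/

open Matrix

open Complex Polynomial

theorem re_neg_of_quartic_eq_zero {a b c e : ℝ} (ha : 0 < a) (hc : 0 < c) (he : 0 < e)
    (hΔ : c ^ 2 + a ^ 2 * e < a * b * c) {μ : ℂ}
    (hμ : μ ^ 4 + a * μ ^ 3 + b * μ ^ 2 + c * μ + e = 0) : μ.re < 0 := by
  obtain ⟨x, y, rfl⟩ : ∃ x y : ℝ, μ = x + y * I := ⟨μ.re, μ.im, (re_add_im μ).symm⟩
  have hprod : (a * (x + y * I) ^ 2 + c) * (a * (x + y * I) ^ 2 + a ^ 2 * (x + y * I) + (a * b - c))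
      = ((a * b * c - c ^ 2 - a ^ 2 * e : ℝ) : ℂ) := by
    push_cast
    linear_combination (a : ℂ) ^ 2 * hμ
  set r₁ := a * (x ^ 2 - y ^ 2) + c
  set r₂ := a * (x ^ 2 - y ^ 2) + a ^ 2 * x + (a * b - c)
  have hparts := Complex.ext_iff.mp hprod
  simp only [sq, mul_re, mul_im, add_re, add_im, sub_re, sub_im, ofReal_re, ofReal_im, I_re, I_im]
    at hparts
  have hre : r₁ * r₂ - 2 * a ^ 2 * x * (2 * x + a) * y ^ 2 = a * b * c - c ^ 2 - a ^ 2 * e := by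
    linear_combination hparts.1
  have him : a * y * (r₁ * (2 * x + a) + 2 * x * r₂) = 0 := by
    linear_combination hparts.2
  suffices x < 0 by simpa
  by_contra! hx
  have hbc : 0 < a * b - c := by nlinarith
  rcases eq_or_ne y 0 with rfl | hy
  · have h₁ : c ≤ r₁ := by simp only [r₁]; nlinarith [mul_nonneg ha.le (sq_nonneg x)]
    have h₂ : a * b - c ≤ r₂ := by simp only [r₂]; nlinarith [mul_nonneg ha.le (sq_nonneg x)]
    nlinarith [mul_le_mul h₁ h₂ hbc.le (hc.le.trans h₁), mul_pos (pow_pos ha 2) he]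
  · have hlin : r₁ * (2 * x + a) = -(2 * x * r₂) := by
      have := (mul_eq_zero.mp him).resolve_left (mul_ne_zero ha.ne' hy)
      linarith
    have hsign : r₁ * r₂ * (2 * x + a) = -(2 * x * r₂ ^ 2) := by linear_combination r₂ * hlin
    have hpos : 0 < r₁ * r₂ := by
      nlinarith [mul_nonneg (mul_nonneg hx (by linarith : 0 ≤ 2 * x + a))
        (mul_nonneg (sq_nonneg a) (sq_nonneg y))]
    nlinarith [mul_pos hpos (by linarith : 0 < 2 * x + a), mul_nonneg hx (sq_nonneg r₂)]

theorem IsHurwitzStable.of_charpoly_eq_quartic {M : Matrix (Fin 4) (Fin 4) ℝ} {a b c e : ℝ}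
    (ha : 0 < a) (hc : 0 < c) (he : 0 < e) (hΔ : c ^ 2 + a ^ 2 * e < a * b * c)
    (hM : M.charpoly = X ^ 4 + C a * X ^ 3 + C b * X ^ 2 + C c * X + C e) :
    IsHurwitzStable M := by
  intro μ hμ
  rw [show M.map ofReal = M.map ofRealHom from rfl, mem_spectrum_iff_isRoot_charpoly,
    charpoly_map, hM] at hμ
  exact re_neg_of_quartic_eq_zero ha hc he hΔ (by simpa using hμ)

theorem charpoly_diagonal_mul_example (q : ℝ) (d : Fin 4 → ℝ) :
    (diagonal d * !![-1, 0, q, 2*q; -1, -1, 0, 0; -1, -1, -1, 0; -1, -1, -1, -1]).charpoly =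
      X ^ 4 + C (d 0 + d 1 + d 2 + d 3) * X ^ 3
        + C (d 0 * d 1 + d 1 * d 2 + d 1 * d 3 + d 2 * d 3 + (1 + q) * (d 0 * d 2)
          + (1 + 2 * q) * (d 0 * d 3)) * X ^ 2
        + C (d 0 * d 1 * d 2 + d 0 * d 1 * d 3 + d 1 * d 2 * d 3 + (1 + q) * (d 0 * d 2 * d 3)) * X
        + C (d 0 * d 1 * d 2 * d 3) := by
  refine Polynomial.funext fun t => ?_
  rw [eval_charpoly]
  simp only [scalar_apply, det_succ_row_zero, Matrix.sub_apply, diagonal_apply, mul_apply, of_apply,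
    ↓reduceIte, submatrix_apply, Fin.succAbove, cons_val, det_unique, Fin.default_eq_zero,
    Fin.reduceSucc, Fin.sum_univ_succ, Fin.coe_ofNat_eq_mod, Fin.reduceEq,
    Fin.reduceCastSucc, Fin.reduceLT, eval_add, eval_pow, eval_X, eval_mul, eval_C]
  ring

/-- For every `q ≥ 0`, the matrix
`[[-1,0,q,2q],[-1,-1,0,0],[-1,-1,-1,0],[-1,-1,-1,-1]]` is D-stable. -/
theorem example_four_by_four_isDStable (q : ℝ) (hq : q ≥ 0) :
    IsDStable !![-1, 0, q, 2*q; -1, -1, 0, 0; -1, -1, -1, 0; -1, -1, -1, -1] := by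
  intro d hd
  have h₀ := hd 0; have h₁ := hd 1; have h₂ := hd 2; have h₃ := hd 3
  refine .of_charpoly_eq_quartic (by positivity) (by positivity) (by positivity) ?_
    (charpoly_diagonal_mul_example q d)
  rw [← sub_pos]
  ring_nf
  positivity
end
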